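/- arXiv:math/0312363 — 11 statements merged into one kernel-verified Lean document; each statement's English description precedes it below -/
import Mathlib

section
/- For every θ with 0 < θ < π, the function f_θ : ℝ → ℝ defined by f_θ(x) = −arg(1 − e^{x+iθ}) is differentiable on all of ℝ, and its derivative is f_θ'(x) = sin θ / (2(cosh x − cos θ)); in particular f_θ'(x) > 0 for all x, so f_θ is strictly increasing. -/
/-- `f θ x = −arg(1 − e^{x+iθ})`, the circle pattern angle function. -/
noncomputable def f (θ x : ℝ) : ℝ := -(1 - Complex.exp (x + θ * Complex.I)).arg

lemma f_eq (θ : ℝ) (hθ0 : 0 < θ) (hθπ : θ < Real.pi) (x : ℝ) :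
    f θ x = Real.pi / 2 - Real.arctan ((Real.exp (-x) - Real.cos θ) / Real.sin θ) := by
  have hs : 0 < Real.sin θ := Real.sin_pos_of_pos_of_lt_pi hθ0 hθπ
  set g : ℝ := (Real.exp (-x) - Real.cos θ) / Real.sin θ with hg
  have hsq : 0 < Real.sqrt (1 + g ^ 2) := Real.sqrt_pos.2 (by positivity)
  set φ : ℝ := Real.arctan g - Real.pi / 2 with hφ
  have harg : (1 - Complex.exp (x + θ * Complex.I)).arg = φ := by
    have hkey : (1 - Complex.exp (x + θ * Complex.I)) =
        ((Real.exp x * Real.sin θ * Real.sqrt (1 + g ^ 2) : ℝ) : ℂ) *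
          (Real.cos φ + Real.sin φ * Complex.I) := by
      have hcos : Real.cos φ = g / Real.sqrt (1 + g ^ 2) := by
        rw [hφ, Real.cos_sub, Real.cos_pi_div_two, Real.sin_pi_div_two,
          Real.sin_arctan]; ring
      have hsin : Real.sin φ = -(1 / Real.sqrt (1 + g ^ 2)) := by
        rw [hφ, Real.sin_sub, Real.cos_pi_div_two, Real.sin_pi_div_two,
          Real.cos_arctan]; ring
      have hexp : Complex.exp (x + θ * Complex.I) =
          (Real.exp x : ℝ) * (Real.cos θ + Real.sin θ * Complex.I) := by
        rw [Complex.exp_add, Complex.exp_mul_I]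
        simp [Complex.ofReal_exp, Complex.ofReal_cos, Complex.ofReal_sin]
      apply Complex.ext
      · simp only [hexp, hcos, hsin, Complex.sub_re, Complex.one_re, Complex.mul_re,
          Complex.mul_im, Complex.add_re, Complex.add_im, Complex.ofReal_re, Complex.ofReal_im,
          Complex.I_re, Complex.I_im, Complex.one_im]
        field_simp
        rw [hg]
        field_simp
        have h1 : Real.exp x * Real.exp (-x) = 1 := by rw [← Real.exp_add]; simp
        linear_combination (-
          Real.sqrt ((Real.sin θ ^ 2 + (Real.exp (-x) - Real.cos θ) ^ 2) / Real.sin θ ^ 2)) * h1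
      · simp only [hexp, hcos, hsin, Complex.sub_im, Complex.one_im, Complex.mul_re,
          Complex.mul_im, Complex.add_re, Complex.add_im, Complex.ofReal_re, Complex.ofReal_im,
          Complex.I_re, Complex.I_im]
        field_simp
        ring
    rw [hkey, Complex.arg_real_mul _ (by positivity)]
    push_cast
    exact Complex.arg_cos_add_sin_mul_I ⟨by
      have := Real.neg_pi_div_two_lt_arctan g
      rw [hφ]; linarith [Real.pi_pos], by
      have := Real.arctan_lt_pi_div_two g
      rw [hφ]; linarith [Real.pi_pos]⟩
  rw [f, harg, hφ]; ring

/-- For `0 < θ < π`, the function `f θ` is differentiable everywhere with derivative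
`sin θ / (2 (cosh x − cos θ))`, which is positive; hence `f θ` is strictly increasing. -/
theorem fTheta_hasDerivAt_and_strictMono (θ : ℝ) (hθ0 : 0 < θ) (hθπ : θ < Real.pi) :
    (∀ x : ℝ, HasDerivAt (f θ) (Real.sin θ / (2 * (Real.cosh x - Real.cos θ))) x) ∧
    (∀ x : ℝ, 0 < Real.sin θ / (2 * (Real.cosh x - Real.cos θ))) ∧
    StrictMono (f θ) := by
  have hs : 0 < Real.sin θ := Real.sin_pos_of_pos_of_lt_pi hθ0 hθπ
  have hcosθ : Real.cos θ < 1 := by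
    calc Real.cos θ < Real.cos 0 := by
          apply Real.cos_lt_cos_of_nonneg_of_le_pi le_rfl hθπ.le hθ0
      _ = 1 := Real.cos_zero
  have hpos : ∀ x : ℝ, 0 < Real.sin θ / (2 * (Real.cosh x - Real.cos θ)) := by
    intro x
    have := Real.one_le_cosh x
    apply div_pos hs; linarith
  have hderiv : ∀ x : ℝ, HasDerivAt (f θ)
      (Real.sin θ / (2 * (Real.cosh x - Real.cos θ))) x := by
    intro x
    have hg : HasDerivAt (fun x : ℝ => (Real.exp (-x) - Real.cos θ) / Real.sin θ)
        (-Real.exp (-x) / Real.sin θ) x := by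
      have h1 : HasDerivAt (fun x : ℝ => Real.exp (-x)) (-Real.exp (-x)) x := by
        simpa [Function.comp_def] using (Real.hasDerivAt_exp (-x)).comp x ((hasDerivAt_id x).neg)
      simpa using (h1.sub_const (Real.cos θ)).div_const (Real.sin θ)
    set g := (Real.exp (-x) - Real.cos θ) / Real.sin θ with hgdef
    have harct : HasDerivAt (fun x : ℝ =>
        Real.pi / 2 - Real.arctan ((Real.exp (-x) - Real.cos θ) / Real.sin θ))
        (-(1 / (1 + g ^ 2) * (-Real.exp (-x) / Real.sin θ))) x := by
      exact (((Real.hasDerivAt_arctan g).comp x hg)).const_sub (Real.pi / 2)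
    have heq : -(1 / (1 + g ^ 2) * (-Real.exp (-x) / Real.sin θ))
        = Real.sin θ / (2 * (Real.cosh x - Real.cos θ)) := by
      have hcosh : Real.cosh x = (Real.exp x + Real.exp (-x)) / 2 := Real.cosh_eq x
      have hden : 1 + g ^ 2 =
          (Real.exp (-x) * (2 * (Real.cosh x - Real.cos θ))) / Real.sin θ ^ 2 := by
        rw [hgdef, hcosh]
        have h1 : Real.exp (-x) * Real.exp x = 1 := by rw [← Real.exp_add]; simp
        field_simp
        nlinarith [Real.sin_sq_add_cos_sq θ]
      rw [hden]
      have he : (0:ℝ) < Real.exp (-x) := Real.exp_pos _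
      have hc : 0 < Real.cosh x - Real.cos θ := by
        have := Real.one_le_cosh x; linarith
      field_simp
    rw [← heq]
    apply harct.congr_of_eventuallyEq
    filter_upwards with y
    exact f_eq θ hθ0 hθπ y
  refine ⟨hderiv, hpos, ?_⟩
  apply strictMono_of_deriv_pos
  intro x
  rw [(hderiv x).deriv]
  exact hpos x
end

section
/- For every θ with 0 < θ < π and every x ∈ ℝ, the function f_θ satisfies the functional equation f_θ(x) + f_θ(−x) = π − θ. -/
/-!
With `u = 1 - e^{x+iθ}` and `v = 1 - e^{-x+iθ}` one has
`u v = 2 (cosh x - cos θ) e^{i(θ-π)}`, a positive multiple of `e^{i(θ-π)}`.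
Hence `arg u + arg v ≡ θ - π (mod 2π)`, and since `u`, `v` and `u v` all lie in the open
lower half plane, their arguments lie in `(-π, 0)`, which forces `arg u + arg v = θ - π`.
-/

open Complex
open scoped Real

theorem Complex.arg_mul_eq_add_arg_of_im_neg {u v : ℂ} (hu : u.im < 0) (hv : v.im < 0)
    (huv : (u * v).im < 0) : arg (u * v) = arg u + arg v := by
  have hu0 : u ≠ 0 := fun h ↦ by simp [h] at hu
  have hv0 : v ≠ 0 := fun h ↦ by simp [h] at hv
  obtain ⟨k, hk⟩ := Real.Angle.angle_eq_iff_two_pi_dvd_sub.1 <|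
    (arg_mul_coe_angle hu0 hv0).trans (Real.Angle.coe_add _ _).symm
  have hk_abs : |(k : ℝ)| < 1 := by
    have := arg_neg_iff.2 hu; have := arg_neg_iff.2 hv; have := arg_neg_iff.2 huv
    have := neg_pi_lt_arg u; have := neg_pi_lt_arg v; have := neg_pi_lt_arg (u * v)
    rw [abs_lt]
    constructor <;> nlinarith [Real.pi_pos]
  have hk0 : k = 0 := Int.abs_lt_one_iff.1 (by exact_mod_cast hk_abs)
  rw [hk0, Int.cast_zero, mul_zero] at hk
  linarith

theorem im_one_sub_exp_add_mul_I (x θ : ℝ) :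
    (1 - exp (x + θ * I)).im = -(Real.exp x * Real.sin θ) := by
  simp [exp_im]

theorem one_sub_exp_add_mul_I_mul_one_sub_exp_neg_add_mul_I (x θ : ℝ) :
    (1 - exp (x + θ * I)) * (1 - exp (↑(-x) + θ * I)) =
      ↑(2 * (Real.cosh x - Real.cos θ)) * exp (↑(θ - π) * I) := by
  have hπ : exp (↑(θ - π) * I) = -exp (θ * I) := by
    push_cast
    rw [sub_mul, exp_sub, exp_pi_mul_I, div_neg, div_one]
  rw [hπ]
  push_cast
  rw [Complex.cosh, Complex.cos, exp_add, exp_add, exp_neg, neg_mul, exp_neg]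
  field_simp
  ring

theorem Real.cos_lt_cosh {θ : ℝ} (hθ0 : 0 < θ) (hθπ : θ < π) (x : ℝ) :
    Real.cos θ < Real.cosh x := by
  have hcos : Real.cos θ < 1 := by
    simpa using Real.cos_lt_cos_of_nonneg_of_le_pi le_rfl hθπ.le hθ0
  exact hcos.trans_le (Real.one_le_cosh x)

theorem arg_one_sub_exp_add_mul_I_mul_one_sub_exp_neg_add_mul_I {θ : ℝ} (hθ0 : 0 < θ)
    (hθπ : θ < π) (x : ℝ) :
    arg ((1 - exp (x + θ * I)) * (1 - exp (↑(-x) + θ * I))) = θ - π := by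
  have hr : 0 < 2 * (Real.cosh x - Real.cos θ) := by linarith [Real.cos_lt_cosh hθ0 hθπ x]
  rw [one_sub_exp_add_mul_I_mul_one_sub_exp_neg_add_mul_I, arg_real_mul _ hr, exp_mul_I,
    arg_cos_add_sin_mul_I ⟨by linarith, by linarith⟩]

/-- For `0 < θ < π`, the functional equation `f θ x + f θ (−x) = π − θ` holds. -/
theorem fTheta_functional_equation (θ : ℝ) (hθ0 : 0 < θ) (hθπ : θ < Real.pi) (x : ℝ) :
    f θ x + f θ (-x) = Real.pi - θ := by
  have him (y : ℝ) : (1 - exp (y + θ * I)).im < 0 := by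
    rw [im_one_sub_exp_add_mul_I, neg_lt_zero]
    exact mul_pos (Real.exp_pos y) (Real.sin_pos_of_pos_of_lt_pi hθ0 hθπ)
  have hprod := arg_one_sub_exp_add_mul_I_mul_one_sub_exp_neg_add_mul_I hθ0 hθπ x
  have hprod_im := arg_neg_iff.1 (hprod ▸ sub_neg.2 hθπ)
  rw [arg_mul_eq_add_arg_of_im_neg (him x) (him (-x)) hprod_im] at hprod
  unfold f
  linarith
end

section
/- For every θ with 0 < θ < π and every y with 0 < y < π − θ, one has f_θ( log( sin y / sin(y+θ) ) ) = y; that is, the inverse function of f_θ on (0, π−θ) is given by f_θ^{−1}(y) = log( sin y / sin(y+θ) ). -/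
/-- For `0 < θ < π` and `0 < y < π − θ`, the inverse function of `f θ` is
`y ↦ log (sin y / sin (y + θ))`. -/
theorem fTheta_inverse (θ : ℝ) (hθ0 : 0 < θ) (hθπ : θ < Real.pi)
    (y : ℝ) (hy0 : 0 < y) (hy : y < Real.pi - θ) :
    f θ (Real.log (Real.sin y / Real.sin (y + θ))) = y := by
  have hsy : 0 < Real.sin y := Real.sin_pos_of_pos_of_lt_pi hy0 (by linarith)
  have hsyθ : 0 < Real.sin (y + θ) :=
    Real.sin_pos_of_pos_of_lt_pi (by linarith) (by linarith)
  set x := Real.log (Real.sin y / Real.sin (y + θ)) with hx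
  have hexp : Real.exp x = Real.sin y / Real.sin (y + θ) :=
    Real.exp_log (by positivity)
  have hsθ : 0 < Real.sin θ := Real.sin_pos_of_pos_of_lt_pi hθ0 hθπ
  have hadd : Real.sin (y + θ) = Real.sin y * Real.cos θ + Real.cos y * Real.sin θ :=
    Real.sin_add y θ
  have h1 : 1 - Real.exp x * Real.cos θ = Real.sin θ / Real.sin (y + θ) * Real.cos y := by
    rw [hexp]; field_simp; nlinarith [hadd]
  have h2 : Real.exp x * Real.sin θ = Real.sin θ / Real.sin (y + θ) * Real.sin y := by
    rw [hexp]; field_simp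
  have hexpc : Complex.exp ((x : ℂ) + θ * Complex.I)
      = (Real.exp x : ℂ) * ((Real.cos θ : ℂ) + (Real.sin θ : ℂ) * Complex.I) := by
    rw [Complex.exp_add, Complex.exp_mul_I, Complex.ofReal_exp]
    norm_cast
  have key : (1 - Complex.exp (x + θ * Complex.I)) =
      ((Real.sin θ / Real.sin (y + θ) : ℝ) : ℂ) *
        (Complex.cos ((-y : ℝ) : ℂ) + Complex.sin ((-y : ℝ) : ℂ) * Complex.I) := by
    rw [hexpc, ← Complex.ofReal_cos, ← Complex.ofReal_sin, Real.cos_neg, Real.sin_neg]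
    apply Complex.ext <;>
      simp only [Complex.sub_re, Complex.sub_im, Complex.one_re, Complex.one_im,
        Complex.mul_re, Complex.mul_im, Complex.add_re, Complex.add_im,
        Complex.ofReal_re, Complex.ofReal_im, Complex.I_re, Complex.I_im,
        Complex.neg_re, Complex.neg_im]
    · linarith [h1]
    · linarith [h2]
  rw [f, key, Complex.arg_real_mul _ (by positivity),
    Complex.arg_cos_add_sin_mul_I ⟨by linarith, by linarith⟩]
  ring
end

section
/- For every θ with 0 < θ < π and every x ≤ 0, the integral F_θ(x) := ∫_{−∞}^{x} f_θ(ξ) dξ converges and equals the imaginary part of the dilogarithm series at e^{x+iθ}, namely F_θ(x) = ∑_{n=1}^{∞} e^{n x} sin(n θ)/n². -/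
open MeasureTheory

open Set Real in
lemma integrableOn_exp_mul_Iic' (c x : ℝ) (hc : 0 < c) :
    IntegrableOn (fun ξ => Real.exp (c * ξ)) (Set.Iic x) := by
  have key : ∀ a b : ℝ, ∫ ξ in a..b, Real.exp (c * ξ) = (Real.exp (c * b) - Real.exp (c * a)) / c := by
    intro a b
    rw [eq_div_iff hc.ne', mul_comm]
    rw [intervalIntegral.mul_integral_comp_mul_left (f := Real.exp) (c := c) (a := a) (b := b), integral_exp]
  refine integrableOn_Iic_of_intervalIntegral_norm_bounded
      (Real.exp (c * x) / c) x
      (fun y => ((Continuous.intervalIntegrable (by continuity) y x).1)) Filter.tendsto_id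
      (Filter.Eventually.of_forall fun y => ?_)
  have hnorm : ∀ ξ : ℝ, ‖Real.exp (c * ξ)‖ = Real.exp (c * ξ) :=
    fun ξ => Real.norm_of_nonneg (Real.exp_pos _).le
  simp only [hnorm, id, key]
  apply div_le_div_of_nonneg_right _ hc.le
  simp [(Real.exp_pos _).le]

open Set Real in
lemma integral_exp_mul_Iic' (c x : ℝ) (hc : 0 < c) :
    ∫ ξ in Set.Iic x, Real.exp (c * ξ) = Real.exp (c * x) / c := by
  have key : ∀ a b : ℝ, ∫ ξ in a..b, Real.exp (c * ξ) = (Real.exp (c * b) - Real.exp (c * a)) / c := by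
    intro a b
    rw [eq_div_iff hc.ne', mul_comm]
    rw [intervalIntegral.mul_integral_comp_mul_left (f := Real.exp) (c := c) (a := a) (b := b), integral_exp]
  refine tendsto_nhds_unique
      (intervalIntegral_tendsto_integral_Iic _ (integrableOn_exp_mul_Iic' c x hc) Filter.tendsto_id) ?_
  simp_rw [key]
  have : Filter.Tendsto (fun y : ℝ => Real.exp (c * y)) Filter.atBot (nhds 0) := by
    apply Real.tendsto_exp_atBot.comp
    exact Filter.Tendsto.const_mul_atBot hc Filter.tendsto_id
  have h2 : Filter.Tendsto (fun y : ℝ => (Real.exp (c * x) - Real.exp (c * y)) / c)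
      Filter.atBot (nhds ((Real.exp (c * x) - 0) / c)) :=
    ((this.const_sub _).div_const c)
  simpa using h2

/-- Pointwise series representation of `f` for `ξ < 0`. -/
lemma hasSum_f (θ : ℝ) {ξ : ℝ} (hξ : ξ < 0) :
    HasSum (fun n : ℕ =>
      Real.exp (((n : ℝ) + 1) * ξ) * Real.sin (((n : ℝ) + 1) * θ) / ((n : ℝ) + 1))
      (f θ ξ) := by
  set z : ℂ := Complex.exp (ξ + θ * Complex.I) with hz
  have hnorm : ‖z‖ < 1 := by
    rw [hz, Complex.norm_exp]
    have : (↑ξ + ↑θ * Complex.I).re = ξ := by simp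
    rw [this]
    exact Real.exp_lt_one_iff.mpr hξ
  have h := Complex.hasSum_taylorSeries_neg_log hnorm
  have him : HasSum (fun n : ℕ => (z ^ n / n).im) (f θ ξ) := by
    have := Complex.imCLM.hasSum h
    simpa [f, Complex.log_im] using this
  have h0 : ((z : ℂ) ^ 0 / (0 : ℕ)).im = 0 := by simp
  have hshift : HasSum (fun n : ℕ => (z ^ (n + 1) / (((n : ℕ) + 1 : ℕ) : ℂ)).im) (f θ ξ) := by
    have h2 := (hasSum_nat_add_iff' (f := fun n : ℕ => ((z : ℂ) ^ n / (n : ℂ)).im) 1).2 him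
    simpa [h0] using h2
  convert hshift using 2 with n
  have hzpow : z ^ (n + 1) = Complex.exp (((n : ℂ) + 1) * (ξ + θ * Complex.I)) := by
    rw [hz, ← Complex.exp_nat_mul]
    push_cast
    ring_nf
  have hre : ((((n : ℂ) + 1)) * (↑ξ + ↑θ * Complex.I)).re = ((n : ℝ) + 1) * ξ := by
    simp [Complex.add_re, Complex.mul_re]
  have him2 : ((((n : ℂ) + 1)) * (↑ξ + ↑θ * Complex.I)).im = ((n : ℝ) + 1) * θ := by
    simp [Complex.add_im, Complex.mul_im]
  rw [hzpow, Complex.div_im, Complex.exp_im, Complex.exp_re, hre, him2]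
  push_cast
  have him3 : ((n : ℂ) + 1).im = 0 := by simp
  have hnre : ((n : ℂ) + 1).re = (n : ℝ) + 1 := by simp
  have habs : Complex.normSq ((n : ℂ) + 1) = ((n : ℝ) + 1) ^ 2 := by
    rw [Complex.normSq_apply, hnre, him3]
    ring
  rw [him3, hnre, habs]
  have hne : ((n : ℝ) + 1) ≠ 0 := by positivity
  field_simp
  ring

/-- For `0 < θ < π` and `x ≤ 0`, the integral `F_θ(x) = ∫_{−∞}^x f_θ` converges and equals
the imaginary part of the dilogarithm series at `e^{x+iθ}`, i.e.
`∑_{n=1}^∞ e^{n x} sin (n θ) / n²`. -/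
theorem fTheta_integral_eq_dilog_series (θ : ℝ) (hθ0 : 0 < θ) (hθπ : θ < Real.pi)
    (x : ℝ) (hx : x ≤ 0) :
    IntegrableOn (f θ) (Set.Iic x) volume ∧
    HasSum
      (fun n : ℕ =>
        Real.exp (((n : ℝ) + 1) * x) * Real.sin (((n : ℝ) + 1) * θ) / ((n : ℝ) + 1) ^ 2)
      (∫ ξ in Set.Iic x, f θ ξ) := by
  set F : ℕ → ℝ → ℝ := fun n ξ =>
    Real.exp (((n : ℝ) + 1) * ξ) * Real.sin (((n : ℝ) + 1) * θ) / ((n : ℝ) + 1)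
  set μ := volume.restrict (Set.Iic x)
  have hpos : ∀ n : ℕ, (0 : ℝ) < (n : ℝ) + 1 := fun n => by positivity
  -- integrability of each term
  have hF_int : ∀ n : ℕ, Integrable (F n) μ := by
    intro n
    have := (integrableOn_exp_mul_Iic' ((n : ℝ) + 1) x (hpos n)).mul_const
        (Real.sin (((n : ℝ) + 1) * θ) / ((n : ℝ) + 1))
    simpa [F, mul_div_assoc] using this
  -- integral of each term
  have hF_integral : ∀ n : ℕ, ∫ ξ, F n ξ ∂μ
      = Real.exp (((n : ℝ) + 1) * x) * Real.sin (((n : ℝ) + 1) * θ) / ((n : ℝ) + 1) ^ 2 := by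
    intro n
    have : ∫ ξ, F n ξ ∂μ
        = (∫ ξ in Set.Iic x, Real.exp (((n : ℝ) + 1) * ξ)) * (Real.sin (((n : ℝ) + 1) * θ) / ((n : ℝ) + 1)) := by
      rw [← MeasureTheory.integral_mul_const]
      exact integral_congr_ae (Filter.Eventually.of_forall fun ξ => by simp [F, mul_div_assoc])
    rw [this, integral_exp_mul_Iic' _ _ (hpos n), div_mul_div_comm, ← sq]
  -- summability of the integrals of norms
  have hF_sum : Summable fun n : ℕ => ∫ ξ, ‖F n ξ‖ ∂μ := by
    have hbound : ∀ n : ℕ, ∫ ξ, ‖F n ξ‖ ∂μ ≤ 1 / ((n : ℝ) + 1) ^ 2 := by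
      intro n
      have h1 : ∫ ξ, ‖F n ξ‖ ∂μ ≤ ∫ ξ in Set.Iic x, Real.exp (((n : ℝ) + 1) * ξ) / ((n : ℝ) + 1) := by
        refine integral_mono_of_nonneg (Filter.Eventually.of_forall fun ξ => norm_nonneg _)
          ((integrableOn_exp_mul_Iic' _ x (hpos n)).div_const _) ?_
        refine Filter.Eventually.of_forall fun ξ => ?_
        have h2 : ‖F n ξ‖ ≤ Real.exp (((n : ℝ) + 1) * ξ) * 1 / ((n : ℝ) + 1) := by
          simp only [F, Real.norm_eq_abs]
          rw [abs_div, abs_of_nonneg (hpos n).le, abs_mul, abs_of_nonneg (Real.exp_pos _).le]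
          apply div_le_div_of_nonneg_right _ (hpos n).le
          exact mul_le_mul_of_nonneg_left (abs_le.mpr ⟨Real.neg_one_le_sin _, Real.sin_le_one _⟩) (Real.exp_pos _).le
        simpa using h2
      have h3 : ∫ ξ in Set.Iic x, Real.exp (((n : ℝ) + 1) * ξ) / ((n : ℝ) + 1)
          = Real.exp (((n : ℝ) + 1) * x) / ((n : ℝ) + 1) ^ 2 := by
        rw [MeasureTheory.integral_div, integral_exp_mul_Iic' _ _ (hpos n)]
        rw [div_div, ← sq]
      refine h1.trans ?_
      rw [h3]
      apply div_le_div_of_nonneg_right _ (by positivity : (0:ℝ) ≤ ((n:ℝ)+1)^2)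
      rw [Real.exp_le_one_iff]
      exact mul_nonpos_of_nonneg_of_nonpos (hpos n).le hx
    have hnn : ∀ n : ℕ, 0 ≤ ∫ ξ, ‖F n ξ‖ ∂μ := fun n =>
      integral_nonneg fun ξ => norm_nonneg _
    refine Summable.of_nonneg_of_le hnn hbound ?_
    have hsum2 : Summable fun n : ℕ => 1 / ((n : ℝ)) ^ 2 :=
      Real.summable_one_div_nat_pow.mpr one_lt_two
    have := (_root_.summable_nat_add_iff (f := fun n : ℕ => 1 / ((n : ℝ)) ^ 2) 1).2 hsum2
    refine this.congr fun n => ?_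
    push_cast
    ring_nf
  -- the key has-sum of integrals
  have hkey := MeasureTheory.hasSum_integral_of_summable_integral_norm hF_int hF_sum
  -- a.e. equality of f with the tsum
  have hae : (fun ξ => ∑' n, F n ξ) =ᵐ[μ] f θ := by
    have h0 : ∀ᵐ ξ ∂μ, ξ ∈ Set.Iic x := ae_restrict_mem measurableSet_Iic
    have h1 : ∀ᵐ ξ ∂μ, ξ ≠ 0 := by
      refine ae_restrict_of_ae ?_
      rw [MeasureTheory.ae_iff]
      have hset : {a : ℝ | ¬a ≠ 0} = {(0 : ℝ)} := by ext a; simp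
      rw [hset]
      exact Real.volume_singleton
    filter_upwards [h0, h1] with ξ hξx hξ0
    have hξ : ξ < 0 := lt_of_le_of_ne (hξx.trans hx) hξ0
    exact (hasSum_f θ hξ).tsum_eq
  -- a.e. summability of the norms
  have hae_summ : ∀ᵐ ξ ∂μ, Summable fun n : ℕ => ‖F n ξ‖ := by
    have h0 : ∀ᵐ ξ ∂μ, ξ ∈ Set.Iic x := ae_restrict_mem measurableSet_Iic
    have h1 : ∀ᵐ ξ ∂μ, ξ ≠ 0 := by
      refine ae_restrict_of_ae ?_
      rw [MeasureTheory.ae_iff]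
      have hset : {a : ℝ | ¬a ≠ 0} = {(0 : ℝ)} := by ext a; simp
      rw [hset]
      exact Real.volume_singleton
    filter_upwards [h0, h1] with ξ hξx hξ0
    have hξ : ξ < 0 := lt_of_le_of_ne (hξx.trans hx) hξ0
    have hgeom : Summable fun n : ℕ => Real.exp ξ ^ (n + 1) :=
      (_root_.summable_nat_add_iff (f := fun n : ℕ => Real.exp ξ ^ n) 1).2
        (summable_geometric_of_lt_one (Real.exp_nonneg ξ) (Real.exp_lt_one_iff.mpr hξ))
    refine Summable.of_nonneg_of_le (fun n => norm_nonneg _) (fun n => ?_) hgeom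
    have hexp : Real.exp (((n : ℝ) + 1) * ξ) = Real.exp ξ ^ (n + 1) := by
      rw [← Real.exp_nat_mul]
      push_cast
      ring_nf
    have h1 : ‖F n ξ‖ = Real.exp (((n : ℝ) + 1) * ξ) * |Real.sin (((n : ℝ) + 1) * θ)| / ((n : ℝ) + 1) := by
      simp only [F, Real.norm_eq_abs, abs_div, abs_mul,
        abs_of_nonneg (Real.exp_pos _).le, abs_of_nonneg (hpos n).le]
    rw [h1, ← hexp]
    calc Real.exp (((n : ℝ) + 1) * ξ) * |Real.sin (((n : ℝ) + 1) * θ)| / ((n : ℝ) + 1)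
        ≤ Real.exp (((n : ℝ) + 1) * ξ) * |Real.sin (((n : ℝ) + 1) * θ)| := by
          apply div_le_self (by positivity)
          have : (0 : ℝ) ≤ (n : ℝ) := Nat.cast_nonneg n
          linarith
      _ ≤ Real.exp (((n : ℝ) + 1) * ξ) * 1 :=
          mul_le_mul_of_nonneg_left (abs_le.mpr ⟨Real.neg_one_le_sin _, Real.sin_le_one _⟩)
            (Real.exp_pos _).le
      _ = Real.exp (((n : ℝ) + 1) * ξ) := mul_one _
  have hint_tsum : Integrable (fun ξ => ∑' n, F n ξ) μ := by
    refine ⟨?_, ?_⟩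
    · have hfm : Measurable (f θ) := by
        have hc : Continuous fun ξ : ℝ => (1 : ℂ) - Complex.exp (ξ + θ * Complex.I) := by
          continuity
        exact (Complex.measurable_arg.comp hc.measurable).neg
      exact hfm.aestronglyMeasurable.congr hae.symm
    · have hmeas : ∀ n : ℕ, AEMeasurable (fun ξ => (‖F n ξ‖₊ : ENNReal)) μ :=
        fun n => (hF_int n).aestronglyMeasurable.enorm
      have hlt : ∫⁻ ξ, ∑' n, (‖F n ξ‖₊ : ENNReal) ∂μ < ⊤ := by
        rw [lintegral_tsum hmeas]
        have heq : ∀ n : ℕ, ∫⁻ ξ, (‖F n ξ‖₊ : ENNReal) ∂μ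
            = ENNReal.ofReal (∫ ξ, ‖F n ξ‖ ∂μ) := fun n => by
          rw [lintegral_coe_eq_integral (fun ξ => ‖F n ξ‖₊)
            (by simpa [coe_nnnorm] using (hF_int n).norm)]
          simp [coe_nnnorm]
        simp_rw [heq]
        rw [← ENNReal.ofReal_tsum_of_nonneg
            (fun n => integral_nonneg fun ξ => norm_nonneg _) hF_sum]
        exact ENNReal.ofReal_lt_top
      refine lt_of_le_of_lt (lintegral_mono_ae ?_) hlt
      filter_upwards [hae_summ] with ξ hs
      have h1 : ‖∑' n, F n ξ‖₊ ≤ ∑' n, ‖F n ξ‖₊ :=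
        nnnorm_tsum_le (by simpa [← NNReal.summable_coe, coe_nnnorm] using hs)
      calc (‖∑' n, F n ξ‖₊ : ENNReal) ≤ ((∑' n, ‖F n ξ‖₊ : NNReal) : ENNReal) := by
            exact_mod_cast h1
        _ = ∑' n, (‖F n ξ‖₊ : ENNReal) := ENNReal.coe_tsum
            (by simpa [← NNReal.summable_coe, coe_nnnorm] using hs)
  constructor
  · exact (hint_tsum.congr hae)
  · have : ∫ ξ, (∑' n, F n ξ) ∂μ = ∫ ξ, f θ ξ ∂μ := integral_congr_ae hae
    rw [← this]
    have hfun : (fun n => ∫ ξ, F n ξ ∂μ)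
        = fun n : ℕ => Real.exp (((n : ℝ) + 1) * x) * Real.sin (((n : ℝ) + 1) * θ) / ((n : ℝ) + 1) ^ 2 :=
      funext hF_integral
    rw [← hfun]
    exact hkey
end

section
/- For every real x with 0 ≤ x ≤ 2π, Clausen's integral satisfies Cl(x) = −∫_{0}^{x} log(2 sin(ξ/2)) dξ; in particular the (improper) integral on the right converges. -/
open Real MeasureTheory Filter Set Topology

-- L1: log is interval integrable on [0, b]
lemma logII {b : ℝ} (hb : 0 < b) : IntervalIntegrable Real.log volume 0 b := by
  have h1 : IntegrableOn (fun ξ : ℝ => -Real.log ξ) (Set.Ioc 0 1) volume := by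
    have hcont : ContinuousOn (fun ξ : ℝ => ξ - ξ * Real.log ξ) (Set.Icc 0 1) :=
      (continuous_id.sub Real.continuous_mul_log).continuousOn
    have hderiv : ∀ t ∈ Set.Ioo (0:ℝ) 1,
        HasDerivAt (fun ξ : ℝ => ξ - ξ * Real.log ξ) (-Real.log t) t := by
      intro t ht
      have h := (hasDerivAt_id t).sub (Real.hasDerivAt_mul_log ht.1.ne')
      refine h.congr_deriv ?_
      ring
    have hpos : ∀ t ∈ Set.Ioo (0:ℝ) 1, 0 ≤ -Real.log t := by
      intro t ht
      simp only [neg_nonneg]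
      exact Real.log_nonpos ht.1.le ht.2.le
    exact intervalIntegral.integrableOn_deriv_of_nonneg hcont hderiv hpos
  have h3 : IntervalIntegrable Real.log volume 0 1 := by
    rw [intervalIntegrable_iff_integrableOn_Ioc_of_le zero_le_one]
    have h2 := h1.neg
    have he : (-fun ξ : ℝ => -Real.log ξ) = Real.log := by funext ξ; simp
    rwa [he] at h2
  rcases le_total b 1 with h | h
  · exact h3.mono_set (Set.uIcc_subset_uIcc (by simp) (by simp [hb.le, h]))
  · exact h3.trans (intervalIntegral.intervalIntegrable_log (Set.notMem_uIcc_of_lt one_pos (by linarith)))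

-- L2: lower bound for sin(ξ/2)
lemma sin_half_lb {ξ : ℝ} (h1 : 0 ≤ ξ) (h2 : ξ ≤ 2*π) :
    ξ * (2*π - ξ) / (2*π^2) ≤ Real.sin (ξ/2) := by
  have hπ := Real.pi_pos
  rcases le_total ξ π with h | h
  · have hs := Real.mul_le_sin (x := ξ/2) (by linarith) (by linarith)
    have hle : ξ * (2*π - ξ) / (2*π^2) ≤ 2/π * (ξ/2) := by
      rw [div_le_iff₀ (by positivity)]
      have e : 2/π * (ξ/2) * (2*π^2) = 2*π*ξ := by field_simp
      rw [e]
      nlinarith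
    linarith
  · have hs := Real.mul_le_sin (x := (2*π-ξ)/2) (by linarith) (by linarith)
    have heq : Real.sin ((2*π-ξ)/2) = Real.sin (ξ/2) := by
      rw [show (2*π-ξ)/2 = π - ξ/2 by ring, Real.sin_pi_sub]
    rw [heq] at hs
    have hle : ξ * (2*π - ξ) / (2*π^2) ≤ 2/π * ((2*π-ξ)/2) := by
      rw [div_le_iff₀ (by positivity)]
      have e : 2/π * ((2*π-ξ)/2) * (2*π^2) = 2*π*(2*π-ξ) := by field_simp
      rw [e]
      nlinarith
    linarith

-- L3: the norm identity
lemma abs_one_sub_aux (r ξ : ℝ) :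
    ‖1 - r * Complex.exp (ξ * Complex.I)‖ ^ 2
      = (1 - r)^2 + 4*r*Real.sin (ξ/2)^2 := by
  rw [Complex.exp_mul_I, ← Complex.ofReal_cos, ← Complex.ofReal_sin,
    Complex.sq_norm, Complex.normSq_apply]
  simp only [Complex.sub_re, Complex.one_re, Complex.mul_re, Complex.ofReal_re,
    Complex.ofReal_im, Complex.add_re, Complex.add_im, Complex.mul_im, Complex.I_re,
    Complex.I_im, Complex.sub_im, Complex.one_im]
  have hc : Real.cos ξ = 1 - 2*Real.sin (ξ/2)^2 := by
    have h := Real.cos_two_mul (ξ/2)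
    rw [show 2*(ξ/2) = ξ by ring] at h
    nlinarith [Real.sin_sq_add_cos_sq (ξ/2)]
  linear_combination r^2 * (Real.sin_sq_add_cos_sq ξ) - 2*r*hc

lemma exp_mul_I_re (θ : ℝ) : (Complex.exp (θ * Complex.I)).re = Real.cos θ := by
  rw [Complex.exp_mul_I]
  simp [Complex.cos_ofReal_re]

-- L4: the cosine series
lemma hasSum_cos_aux {r : ℝ} (hr : |r| < 1) (ξ : ℝ) :
    HasSum (fun n : ℕ => r^(n+1) * Real.cos (((n:ℝ)+1)*ξ) / ((n:ℝ)+1))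
      (-Real.log (‖1 - r * Complex.exp (ξ * Complex.I)‖)) := by
  set z : ℂ := (r : ℂ) * Complex.exp (ξ * Complex.I) with hz
  have hz1 : ‖z‖ < 1 := by
    rw [hz, norm_mul, Complex.norm_real, Real.norm_eq_abs,
      Complex.norm_exp_ofReal_mul_I, mul_one]
    exact hr
  have H := Complex.hasSum_taylorSeries_neg_log hz1
  have Hre := (Complex.reCLM : ℂ →L[ℝ] ℝ).hasSum H
  have hterm : ∀ n : ℕ, Complex.reCLM (z^n / (n:ℂ)) = r^n * Real.cos ((n:ℝ)*ξ) / (n:ℝ) := by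
    intro n
    have h1 : z^n / (n:ℂ) = ((r^n / n : ℝ) : ℂ) * Complex.exp ((((n:ℝ)*ξ) : ℝ) * Complex.I) := by
      calc z^n / (n:ℂ)
          = ((r:ℂ)^n * Complex.exp ((((n:ℝ)*ξ) : ℝ) * Complex.I)) / (n:ℂ) := by
            rw [hz, mul_pow, ← Complex.exp_nat_mul]
            push_cast
            ring_nf
        _ = _ := by push_cast; ring
    rw [h1, Complex.reCLM_apply, Complex.re_ofReal_mul, exp_mul_I_re]
    ring
  have Hre' : HasSum (fun n : ℕ => r^n * Real.cos ((n:ℝ)*ξ) / (n:ℝ))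
      (-Real.log (‖1 - z‖)) := by
    have htgt : Complex.reCLM (-Complex.log (1 - z)) = -Real.log (‖1 - z‖) := by
      simp [Complex.log_re]
    rw [← htgt]
    exact Hre.congr_fun fun n => (hterm n).symm
  have H2 := (hasSum_nat_add_iff' (f := fun n : ℕ => r^n * Real.cos ((n:ℝ)*ξ) / (n:ℝ)) 1).mpr Hre'
  norm_num at H2
  refine H2.congr_fun fun n => ?_
  push_cast
  ring_nf

-- L5: for fixed r ∈ [0,1), the sum equals the integral
lemma key_r {r : ℝ} (hr0 : 0 ≤ r) (hr1 : r < 1) {x : ℝ} :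
    ∑' n : ℕ, r^(n+1) * Real.sin (((n:ℝ)+1)*x) / ((n:ℝ)+1)^2
      = ∫ ξ in (0:ℝ)..x, -Real.log (‖1 - r * Complex.exp (ξ * Complex.I)‖) := by
  have habs : |r| < 1 := abs_lt.mpr ⟨by linarith, hr1⟩
  have H := intervalIntegral.hasSum_integral_of_dominated_convergence
      (μ := volume) (a := 0) (b := x)
      (F := fun (n : ℕ) (ξ : ℝ) => r^(n+1) * Real.cos (((n:ℝ)+1)*ξ) / ((n:ℝ)+1))
      (f := fun ξ : ℝ => -Real.log (‖1 - r * Complex.exp (ξ * Complex.I)‖))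
      (bound := fun (n : ℕ) (_ : ℝ) => r^(n+1))
      (fun n => by
        apply Continuous.aestronglyMeasurable
        continuity)
      (fun n => by
        filter_upwards with ξ _
        have h1 : |Real.cos (((n:ℝ)+1)*ξ)| ≤ 1 := Real.abs_cos_le_one _
        have h2 : (1:ℝ) ≤ (n:ℝ)+1 := by linarith [Nat.cast_nonneg (α := ℝ) n]
        rw [Real.norm_eq_abs, abs_div, abs_mul, abs_of_nonneg (pow_nonneg hr0 _),
          abs_of_pos (show (0:ℝ) < (n:ℝ)+1 by positivity)]
        calc r^(n+1) * |Real.cos (((n:ℝ)+1)*ξ)| / ((n:ℝ)+1)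
            ≤ r^(n+1) * 1 / 1 := by gcongr
          _ = r^(n+1) := by ring)
      (by
        filter_upwards with ξ _
        have : Summable (fun n : ℕ => r^n * r) := (summable_geometric_of_lt_one hr0 hr1).mul_right r
        refine this.congr fun n => ?_
        rw [pow_succ])
      intervalIntegrable_const
      (by
        filter_upwards with ξ _
        exact hasSum_cos_aux habs ξ)
  have heval : ∀ n : ℕ, ∫ ξ in (0:ℝ)..x, r^(n+1) * Real.cos (((n:ℝ)+1)*ξ) / ((n:ℝ)+1)
      = r^(n+1) * Real.sin (((n:ℝ)+1)*x) / ((n:ℝ)+1)^2 := by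
    intro n
    have hn : ((n:ℝ)+1) ≠ 0 := by positivity
    have hd : ∀ ξ : ℝ, HasDerivAt (fun ξ : ℝ => r^(n+1) * Real.sin (((n:ℝ)+1)*ξ) / ((n:ℝ)+1)^2)
        (r^(n+1) * Real.cos (((n:ℝ)+1)*ξ) / ((n:ℝ)+1)) ξ := by
      intro ξ
      have h1 : HasDerivAt (fun ξ : ℝ => ((n:ℝ)+1)*ξ) ((n:ℝ)+1) ξ := by
        simpa using (hasDerivAt_id ξ).const_mul ((n:ℝ)+1)
      have h2 := (Real.hasDerivAt_sin (((n:ℝ)+1)*ξ)).comp ξ h1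
      have h3 := h2.const_mul (r^(n+1) / ((n:ℝ)+1)^2)
      have h4 : (fun ξ : ℝ => r^(n+1) * Real.sin (((n:ℝ)+1)*ξ) / ((n:ℝ)+1)^2)
          = fun ξ : ℝ => (r^(n+1) / ((n:ℝ)+1)^2) * Real.sin (((n:ℝ)+1)*ξ) := by
        funext ξ; ring
      rw [h4]
      refine h3.congr_deriv ?_
      field_simp
    rw [intervalIntegral.integral_eq_sub_of_hasDerivAt (fun ξ _ => hd ξ)
      (by apply Continuous.intervalIntegrable; continuity)]
    simp
  simp only [heval] at H
  exact H.tsum_eq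

/-- Clausen's integral, defined by its convergent Fourier series
`Cl x = ∑_{n=1}^∞ sin (n x) / n²`. -/
noncomputable def Cl (x : ℝ) : ℝ := ∑' n : ℕ, Real.sin (((n : ℝ) + 1) * x) / ((n : ℝ) + 1) ^ 2

/-- For `0 ≤ x ≤ 2π`, the integral `∫_0^x log (2 sin (ξ/2)) dξ` converges and
`Cl x = −∫_0^x log (2 sin (ξ/2)) dξ`. -/
theorem clausen_integral_repr (x : ℝ) (hx0 : 0 ≤ x) (hx : x ≤ 2 * Real.pi) :
    IntervalIntegrable (fun ξ : ℝ => Real.log (2 * Real.sin (ξ / 2)))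
      MeasureTheory.volume 0 x ∧
    Cl x = -∫ ξ in (0 : ℝ)..x, Real.log (2 * Real.sin (ξ / 2)) := by
  have hπ := Real.pi_pos
  have hπ1 : (1:ℝ) ≤ π := by linarith [Real.pi_gt_three]
  have hlogπ : 0 ≤ Real.log π := Real.log_nonneg hπ1
  have hlog2 : 0 ≤ Real.log 2 := Real.log_nonneg one_le_two
  set f : ℝ → ℝ := fun ξ : ℝ => Real.log (2 * Real.sin (ξ / 2)) with hf
  -- pointwise bound
  have hbd : ∀ ξ ∈ Set.Ioo (0:ℝ) (2*π),
      |f ξ| ≤ |Real.log ξ| + |Real.log (2*π - ξ)| + (Real.log 2 + 2*Real.log π) := by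
    intro ξ hξ
    obtain ⟨h0, h2⟩ := hξ
    have hs : 0 < Real.sin (ξ/2) := Real.sin_pos_of_pos_of_lt_pi (by linarith) (by linarith)
    have hub : f ξ ≤ Real.log 2 := by
      have h3 : 2 * Real.sin (ξ/2) ≤ 2 := by nlinarith [Real.sin_le_one (ξ/2)]
      exact Real.log_le_log (by positivity) h3
    have hlb : Real.log ξ + Real.log (2*π - ξ) - 2*Real.log π ≤ f ξ := by
      have hpos1 : 0 < 2*π - ξ := by linarith
      have hq : ξ * (2*π - ξ) / π^2 ≤ 2*Real.sin (ξ/2) := by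
        have h4 := sin_half_lb h0.le h2.le
        rw [div_le_iff₀ (by positivity)] at h4 ⊢
        nlinarith
      have h3 : Real.log (ξ*(2*π-ξ)/π^2) ≤ f ξ :=
        Real.log_le_log (div_pos (mul_pos h0 hpos1) (by positivity)) hq
      have h4 : Real.log (ξ*(2*π-ξ)/π^2)
          = Real.log ξ + Real.log (2*π-ξ) - 2*Real.log π := by
        rw [Real.log_div (mul_pos h0 hpos1).ne' (by positivity),
          Real.log_mul h0.ne' hpos1.ne', Real.log_pow]
        push_cast; ring
      linarith
    rw [abs_le]
    refine ⟨?_, ?_⟩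
    · linarith [neg_abs_le (Real.log ξ), neg_abs_le (Real.log (2*π - ξ))]
    · linarith [abs_nonneg (Real.log ξ), abs_nonneg (Real.log (2*π - ξ))]
  -- the dominating function is interval integrable
  have hsub : Set.uIcc (0:ℝ) x ⊆ Set.uIcc 0 (2*π) := by
    rw [Set.uIcc_of_le hx0, Set.uIcc_of_le (by positivity)]
    exact Set.Icc_subset_Icc le_rfl hx
  have hg1 : IntervalIntegrable (fun ξ : ℝ => |Real.log ξ|) volume 0 x :=
    ((logII (by positivity)).abs).mono_set hsub
  have hg2 : IntervalIntegrable (fun ξ : ℝ => |Real.log (2*π - ξ)|) volume 0 x := by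
    have h := (logII (show (0:ℝ) < 2*π by positivity)).comp_sub_left (2*π)
    simp only [sub_self, sub_zero] at h
    exact ((h.symm).abs).mono_set hsub
  have hg : IntervalIntegrable
      (fun ξ : ℝ => |Real.log ξ| + |Real.log (2*π - ξ)| + (Real.log 2 + 2*Real.log π))
      volume 0 x := (hg1.add hg2).add intervalIntegrable_const
  have h2π : ∀ᵐ ξ : ℝ ∂volume, ξ ≠ 2*π := by
    refine ae_iff.mpr ?_
    have he : {a : ℝ | ¬ a ≠ 2*π} = {2*π} := by ext a; simp
    rw [he]
    exact measure_singleton _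
  have hmemIoo : ∀ᵐ ξ : ℝ ∂volume, ξ ∈ Set.uIoc 0 x → ξ ∈ Set.Ioo (0:ℝ) (2*π) := by
    filter_upwards [h2π] with ξ hne hmem
    rw [Set.uIoc_of_le hx0] at hmem
    exact ⟨hmem.1, lt_of_le_of_ne (le_trans hmem.2 hx) hne⟩
  have hmeasf : Measurable f := by
    apply Real.measurable_log.comp
    exact measurable_const.mul (Real.measurable_sin.comp (measurable_id.div_const 2))
  have hInt : IntervalIntegrable f volume 0 x := by
    rw [intervalIntegrable_iff] at hg ⊢
    apply hg.mono' (hmeasf.aestronglyMeasurable)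
    rw [ae_restrict_iff' measurableSet_uIoc]
    filter_upwards [hmemIoo] with ξ h1 h2
    rw [Real.norm_eq_abs]
    exact hbd ξ (h1 h2)
  refine ⟨hInt, ?_⟩
  -- limits as r → 1⁻
  have hmem : Set.Ioo (1/2 : ℝ) 1 ∈ 𝓝[<] (1:ℝ) :=
    Ioo_mem_nhdsLT_of_mem (⟨by norm_num, le_rfl⟩ : (1:ℝ) ∈ Set.Ioc (1/2) 1)
  -- Claim A
  have hA : Tendsto (fun r : ℝ => ∑' n : ℕ, r^(n+1) * Real.sin (((n:ℝ)+1)*x) / ((n:ℝ)+1)^2)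
      (𝓝[<] (1:ℝ)) (𝓝 (Cl x)) := by
    have hsum : Summable (fun n : ℕ => 1/((n:ℝ)+1)^2) := by
      have h := Real.summable_one_div_nat_pow.mpr one_lt_two
      have h2 := (summable_nat_add_iff 1).mpr h
      refine h2.congr fun n => ?_
      push_cast
      ring
    have hCl : Cl x = ∑' n : ℕ, Real.sin (((n:ℝ)+1)*x) / ((n:ℝ)+1)^2 := rfl
    rw [hCl]
    apply tendsto_tsum_of_dominated_convergence hsum
    · intro k
      have hc : Continuous (fun r : ℝ =>
          r^(k+1) * Real.sin (((k:ℝ)+1)*x) / ((k:ℝ)+1)^2) := by continuity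
      have ht := hc.tendsto 1
      simp only [one_pow, one_mul] at ht
      exact ht.mono_left nhdsWithin_le_nhds
    · filter_upwards [hmem] with r hr k
      have h1 : |r| ≤ 1 := by
        rw [abs_le]; exact ⟨by linarith [hr.1], hr.2.le⟩
      rw [Real.norm_eq_abs, abs_div, abs_mul, abs_pow,
        abs_of_pos (show (0:ℝ) < ((k:ℝ)+1)^2 by positivity)]
      have h2 : |r|^(k+1) ≤ 1 := pow_le_one₀ (abs_nonneg r) h1
      have h3 : |Real.sin (((k:ℝ)+1)*x)| ≤ 1 := Real.abs_sin_le_one _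
      calc |r|^(k+1) * |Real.sin (((k:ℝ)+1)*x)| / ((k:ℝ)+1)^2
          ≤ 1 * 1 / ((k:ℝ)+1)^2 := by gcongr
        _ = 1/((k:ℝ)+1)^2 := by ring
  -- Claim B
  have hB : Tendsto (fun r : ℝ => ∫ ξ in (0:ℝ)..x,
        -Real.log (‖1 - r * Complex.exp (ξ * Complex.I)‖))
      (𝓝[<] (1:ℝ)) (𝓝 (∫ ξ in (0:ℝ)..x, -f ξ)) := by
    apply intervalIntegral.tendsto_integral_filter_of_dominated_convergence
      (bound := fun ξ => |f ξ| + 2*Real.log 2)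
    · filter_upwards with r
      apply Measurable.aestronglyMeasurable
      apply Measurable.neg
      apply Real.measurable_log.comp
      have hci : Continuous fun ξ : ℝ => (1:ℂ) - r * Complex.exp (ξ*Complex.I) :=
        continuous_const.sub (continuous_const.mul ((Complex.continuous_ofReal.mul
          continuous_const).cexp))
      exact (continuous_norm.comp hci).measurable
    · filter_upwards [hmem] with r hr
      filter_upwards [hmemIoo] with ξ h1 h2
      obtain ⟨hξ0, hξ2⟩ := h1 h2
      have hs : 0 < Real.sin (ξ/2) := Real.sin_pos_of_pos_of_lt_pi (by linarith) (by linarith)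
      have hs1 : Real.sin (ξ/2) ≤ 1 := Real.sin_le_one _
      set s := Real.sin (ξ/2) with hsdef
      set A := ‖1 - r * Complex.exp (ξ*Complex.I)‖ with hAdef
      have hA0 : 0 ≤ A := norm_nonneg _
      have hsq : A^2 = (1-r)^2 + 4*r*s^2 := abs_one_sub_aux r ξ
      have hr0 : (0:ℝ) < r := by linarith [hr.1]
      have hr1 : r < 1 := hr.2
      have hA2 : A^2 ≤ 4 := by nlinarith
      have hAle : A ≤ 2 := by nlinarith
      have hs2A : s^2 ≤ A^2 := by nlinarith [hr.1]
      have hAlb : s ≤ A := by nlinarith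
      have hApos : 0 < A := lt_of_lt_of_le hs hAlb
      have hlog1 : Real.log A ≤ Real.log 2 := Real.log_le_log hApos hAle
      have hlog2' : Real.log s ≤ Real.log A := Real.log_le_log hs hAlb
      have hfs : f ξ = Real.log 2 + Real.log s := Real.log_mul two_ne_zero hs.ne'
      rw [norm_neg, Real.norm_eq_abs, abs_le]
      refine ⟨?_, ?_⟩
      · linarith [neg_abs_le (f ξ)]
      · linarith [abs_nonneg (f ξ)]
    · exact (hInt.abs).add intervalIntegrable_const
    · filter_upwards [hmemIoo] with ξ h1 h2
      obtain ⟨hξ0, hξ2⟩ := h1 h2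
      have hs : 0 < Real.sin (ξ/2) := Real.sin_pos_of_pos_of_lt_pi (by linarith) (by linarith)
      have hc : Continuous (fun r : ℝ =>
          ‖1 - r * Complex.exp (ξ*Complex.I)‖) :=
        continuous_norm.comp
          (continuous_const.sub (Complex.continuous_ofReal.mul continuous_const))
      have h1sub : ‖1 - ((1:ℝ):ℂ) * Complex.exp (ξ*Complex.I)‖
          = 2*Real.sin (ξ/2) := by
        have hq := abs_one_sub_aux 1 ξ
        have h2' : ‖1 - ((1:ℝ):ℂ)*Complex.exp (ξ*Complex.I)‖^2
            = (2*Real.sin (ξ/2))^2 := by rw [hq]; ring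
        calc ‖1 - ((1:ℝ):ℂ)*Complex.exp (ξ*Complex.I)‖
            = Real.sqrt (‖1 - ((1:ℝ):ℂ)*Complex.exp (ξ*Complex.I)‖^2) :=
              (Real.sqrt_sq (norm_nonneg _)).symm
          _ = Real.sqrt ((2*Real.sin (ξ/2))^2) := by rw [h2']
          _ = 2*Real.sin (ξ/2) := Real.sqrt_sq (by positivity)
      have htend := hc.tendsto 1
      rw [h1sub] at htend
      have hlogc := (Real.continuousAt_log
        (show (2*Real.sin (ξ/2)) ≠ 0 by positivity)).tendsto
      have hcomp := hlogc.comp htend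
      have : f ξ = Real.log (2*Real.sin (ξ/2)) := rfl
      exact ((hcomp.neg).mono_left nhdsWithin_le_nhds)
  -- conclude
  have heq : (fun r : ℝ => ∑' n : ℕ, r^(n+1) * Real.sin (((n:ℝ)+1)*x) / ((n:ℝ)+1)^2)
      =ᶠ[𝓝[<] (1:ℝ)] (fun r : ℝ => ∫ ξ in (0:ℝ)..x,
        -Real.log (‖1 - r * Complex.exp (ξ*Complex.I)‖)) := by
    filter_upwards [hmem] with r hr
    exact key_r (by linarith [hr.1]) hr.2
  have huniq := tendsto_nhds_unique (hA.congr' heq) hB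
  rw [huniq, intervalIntegral.integral_neg]
end

section
/- At every real x that is not an integer multiple of 2π, Clausen's integral Cl is differentiable and its derivative is Cl'(x) = −log|2 sin(x/2)|. -/
open Filter Finset Complex Topology

private lemma abs_one_sub_exp (t : ℝ) :
    ‖1 - Complex.exp (t * I)‖ = 2 * |Real.sin (t / 2)| := by
  have hs : Real.sin (t / 2) ^ 2 = (1 - Real.cos t) / 2 := by
    rw [← _root_.sq_abs, Real.abs_sin_half, Real.sq_sqrt]
    nlinarith [Real.cos_le_one t]
  have h1 : ‖1 - Complex.exp (t * I)‖ ^ 2 = 2 - 2 * Real.cos t := by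
    rw [Complex.sq_norm, Complex.normSq_apply]
    simp only [Complex.sub_re, Complex.one_re, Complex.exp_ofReal_mul_I_re, Complex.sub_im,
      Complex.one_im, Complex.exp_ofReal_mul_I_im]
    nlinarith [Real.sin_sq_add_cos_sq t]
  have h2 : (2 * |Real.sin (t / 2)|) ^ 2 = 2 - 2 * Real.cos t := by
    rw [mul_pow, _root_.sq_abs]
    nlinarith [hs]
  have h4 : (0:ℝ) ≤ ‖1 - Complex.exp (t * I)‖ := norm_nonneg _
  have h5 : (0:ℝ) ≤ 2 * |Real.sin (t / 2)| := by positivity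
  nlinarith [h1, h2, h4, h5]

private lemma exp_ne_one' (t : ℝ) (ht : ∀ k : ℤ, t ≠ (k : ℝ) * (2 * Real.pi)) :
    Complex.exp (t * I) ≠ 1 := by
  intro hcon
  rw [Complex.exp_eq_one_iff] at hcon
  obtain ⟨n, hn⟩ := hcon
  apply ht n
  have h : (t : ℂ) * I = (((n : ℝ) * (2 * Real.pi) : ℝ) : ℂ) * I := by
    rw [hn]; push_cast; ring
  have := mul_right_cancel₀ Complex.I_ne_zero h
  exact_mod_cast this

private lemma geom_bound (t : ℝ) (hw1 : Complex.exp (t * I) ≠ 1) (n : ℕ) :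
    ‖∑ i ∈ range n, Complex.exp (t * I) ^ (i + 1)‖ ≤ 2 / ‖1 - Complex.exp (t * I)‖ := by
  set w := Complex.exp (t * I) with hw
  have habs : ‖w‖ = 1 := Complex.norm_exp_ofReal_mul_I t
  have hne : (1:ℂ) - w ≠ 0 := sub_ne_zero.mpr (Ne.symm hw1)
  have h1 : ∑ i ∈ range n, w ^ (i + 1) = w * ((w ^ n - 1) / (w - 1)) := by
    rw [← geom_sum_eq hw1 n, mul_sum]
    exact Finset.sum_congr rfl fun i _ => by ring
  rw [h1]
  have h2 : ‖w - 1‖ = ‖1 - w‖ := norm_sub_rev w 1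
  rw [norm_mul, norm_div, habs, one_mul, h2]
  rw [div_le_div_iff₀ (norm_pos_iff.mpr hne) (norm_pos_iff.mpr hne)]
  have h3 : ‖w ^ n - 1‖ ≤ 2 := by
    calc ‖w ^ n - 1‖ ≤ ‖w ^ n‖ + ‖(1:ℂ)‖ :=
          norm_sub_le _ _
    _ = 2 := by rw [norm_pow, habs, one_pow, norm_one]; norm_num
  nlinarith [norm_nonneg (1 - w), h3]

private lemma sum_shift (t : ℝ) (N : ℕ) :
    ∑ i ∈ range (N + 1), Complex.exp (t * I) ^ i / (i : ℂ) =
      ∑ i ∈ range N, Complex.exp (t * I) ^ (i + 1) / ((i : ℂ) + 1) := by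
  rw [Finset.sum_range_succ' (fun i => Complex.exp (t * I) ^ i / (i : ℂ)) N]
  simp only [Nat.cast_zero, div_zero, add_zero, Nat.cast_add, Nat.cast_one]

private lemma smul_eq_div (i : ℕ) (z : ℂ) : ((i : ℝ) + 1)⁻¹ • z = z / ((i : ℂ) + 1) := by
  rw [Complex.real_smul]
  push_cast
  rw [div_eq_inv_mul]

private lemma tendsto_partial_complex (t : ℝ) (ht : ∀ k : ℤ, t ≠ (k : ℝ) * (2 * Real.pi)) :
    Tendsto (fun N => ∑ i ∈ range N, Complex.exp (t * I) ^ (i + 1) / ((i : ℂ) + 1)) atTop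
      (𝓝 (-Complex.log (1 - Complex.exp (t * I)))) := by
  set w := Complex.exp (t * I) with hw
  have hw1 : w ≠ 1 := exp_ne_one' t ht
  have habs : ‖w‖ = 1 := Complex.norm_exp_ofReal_mul_I t
  have hanti : Antitone (fun i : ℕ => ((i : ℝ) + 1)⁻¹) := by
    intro a b hab
    have : ((a : ℝ) + 1) ≤ (b : ℝ) + 1 := by
      have : (a : ℝ) ≤ b := Nat.cast_le.mpr hab
      linarith
    exact inv_anti₀ (by positivity) this
  have h0 : Tendsto (fun i : ℕ => ((i : ℝ) + 1)⁻¹) atTop (𝓝 0) := by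
    simpa [one_div] using tendsto_one_div_add_atTop_nhds_zero_nat (𝕜 := ℝ)
  have hb : ∀ n, ‖∑ i ∈ range n, w ^ (i + 1)‖ ≤ 2 / ‖1 - w‖ := geom_bound t hw1
  have hc : CauchySeq (fun n => ∑ i ∈ range n, ((i : ℝ) + 1)⁻¹ • w ^ (i + 1)) :=
    hanti.cauchySeq_series_mul_of_tendsto_zero_of_bounded h0 hb
  obtain ⟨L, hL⟩ := cauchySeq_tendsto_of_complete hc
  have hL' : Tendsto (fun N => ∑ i ∈ range N, w ^ (i + 1) / ((i : ℂ) + 1)) atTop (𝓝 L) :=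
    hL.congr fun N => Finset.sum_congr rfl fun i _ => smul_eq_div i _
  have hF : Tendsto (fun N => ∑ i ∈ range N, w ^ i / (i : ℂ)) atTop (𝓝 L) := by
    rw [← tendsto_add_atTop_iff_nat 1]
    exact hL'.congr fun N => (sum_shift t N).symm
  have habel := Complex.tendsto_tsum_powerSeries_nhdsWithin_lt hF
  rw [tendsto_map'_iff] at habel
  have h5 : ∀ r : ℝ, r ∈ Set.Ioo (0:ℝ) 1 →
      ((fun z : ℂ => ∑' n : ℕ, w ^ n / (n : ℂ) * z ^ n) ∘ Complex.ofReal) r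
        = -Complex.log (1 - (r : ℂ) * w) := by
    intro r hr
    have hnorm : ‖(r : ℂ) * w‖ < 1 := by
      rw [norm_mul, Complex.norm_real, Real.norm_eq_abs, habs, mul_one,
        abs_of_pos hr.1]
      exact hr.2
    have hts := Complex.hasSum_taylorSeries_neg_log hnorm
    simp only [Function.comp_apply]
    rw [← hts.tsum_eq]
    refine tsum_congr fun n => ?_
    rw [mul_pow]
    ring
  have h6 : Tendsto (fun r : ℝ => -Complex.log (1 - (r : ℂ) * w)) (nhdsWithin 1 (Set.Iio 1))
      (𝓝 (-Complex.log (1 - w))) := by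
    have hre : (0:ℝ) < (1 - w).re := by
      simp only [Complex.sub_re, Complex.one_re, hw, Complex.exp_ofReal_mul_I_re]
      have hcos : Real.cos t ≠ 1 := by
        intro hcon
        rw [Real.cos_eq_one_iff] at hcon
        obtain ⟨n, hn⟩ := hcon
        exact ht n hn.symm
      have := lt_of_le_of_ne (Real.cos_le_one t) hcos
      linarith
    have hcont : ContinuousAt Complex.log (1 - w) :=
      continuousAt_clog (Complex.mem_slitPlane_iff.mpr (Or.inl hre))
    have h7 : Tendsto (fun r : ℝ => 1 - (r : ℂ) * w) (nhdsWithin 1 (Set.Iio 1)) (𝓝 (1 - w)) := by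
      have hcts : Continuous fun r : ℝ => 1 - (r : ℂ) * w := by continuity
      have h8 : Tendsto (fun r : ℝ => 1 - (r : ℂ) * w) (nhdsWithin 1 (Set.Iio 1)) (𝓝 (1 - (1:ℝ) * w)) :=
        (hcts.tendsto 1).mono_left nhdsWithin_le_nhds
      simpa using h8
    exact (hcont.tendsto.comp h7).neg
  have hmem : Set.Ioo (0:ℝ) 1 ∈ nhdsWithin (1:ℝ) (Set.Iio 1) :=
    Ioo_mem_nhdsLT_of_mem ⟨zero_lt_one, le_refl 1⟩
  have hLval : L = -Complex.log (1 - w) :=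
    tendsto_nhds_unique (habel.congr' (eventually_of_mem hmem h5)) h6
  rw [hLval] at hL'
  exact hL'

private lemma term_re (t : ℝ) (i : ℕ) :
    (Complex.exp (t * I) ^ (i + 1) / ((i : ℂ) + 1)).re
      = Real.cos (((i : ℝ) + 1) * t) / ((i : ℝ) + 1) := by
  have h1 : Complex.exp ((t : ℂ) * I) ^ (i + 1)
      = Complex.exp (((((i : ℝ) + 1) * t : ℝ) : ℂ) * I) := by
    rw [← Complex.exp_nat_mul]
    congr 1
    push_cast
    ring
  have h2 : ((i : ℂ) + 1) = ((((i : ℝ) + 1) : ℝ) : ℂ) := by push_cast; ring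
  rw [h1, h2, Complex.div_ofReal_re, Complex.exp_ofReal_mul_I_re]

private lemma sum_cos_eq_re (t : ℝ) (N : ℕ) :
    ∑ i ∈ range N, Real.cos (((i : ℝ) + 1) * t) / ((i : ℝ) + 1)
      = (∑ i ∈ range N, Complex.exp (t * I) ^ (i + 1) / ((i : ℂ) + 1)).re := by
  rw [Complex.re_sum]
  exact Finset.sum_congr rfl fun i _ => (term_re t i).symm

private lemma summable_aux : Summable (fun i : ℕ => (((i : ℝ) + 1))⁻¹ ^ 2) := by
  have h := (summable_nat_add_iff 1).mpr (Real.summable_one_div_nat_pow.mpr one_lt_two)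
  refine h.congr fun n => ?_
  push_cast
  rw [one_div, inv_pow]

/-- Uniform convergence of the complex partial sums on a set where the geometric partial sums
are uniformly bounded. -/
private lemma unif_T (s : Set ℝ) (c : ℝ) (hc : 0 < c)
    (hGb : ∀ t ∈ s, ∀ n, ‖∑ i ∈ range n, Complex.exp (t * I) ^ (i + 1)‖ ≤ c) :
    ∃ V : ℝ → ℂ, TendstoUniformlyOn
      (fun N (t : ℝ) => ∑ i ∈ range N, Complex.exp (t * I) ^ (i + 1) / ((i : ℂ) + 1)) V atTop s := by
  set A : ℕ → ℝ := fun i => ((i : ℝ) + 1)⁻¹ with hAdef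
  set G : ℕ → ℝ → ℂ := fun n (t : ℝ) => ∑ i ∈ range n, Complex.exp (t * I) ^ (i + 1) with hGdef
  -- first piece tends uniformly to 0
  have hu : TendstoUniformlyOn (fun N (t : ℝ) => A N • G (N + 1) t) (fun _ => 0) atTop s := by
    rw [Metric.tendstoUniformlyOn_iff]
    intro ε hε
    have hA0 : Tendsto (fun N : ℕ => A N * c) atTop (𝓝 0) := by
      have h0 : Tendsto A atTop (𝓝 0) := by
        simpa [hAdef, one_div] using tendsto_one_div_add_atTop_nhds_zero_nat (𝕜 := ℝ)
      simpa using h0.mul_const c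
    filter_upwards [hA0.eventually_lt_const hε] with N hN t htm
    rw [dist_eq_norm, zero_sub, norm_neg, norm_smul, Real.norm_eq_abs,
      _root_.abs_of_nonneg (by positivity : (0:ℝ) ≤ A N)]
    calc A N * ‖G (N + 1) t‖ ≤ A N * c := by
          have := hGb t htm (N + 1)
          have hA : (0:ℝ) ≤ A N := by positivity
          exact mul_le_mul_of_nonneg_left this hA
    _ < ε := hN
  -- second piece converges uniformly by the M-test
  have hv : TendstoUniformlyOn (fun N (t : ℝ) => ∑ i ∈ range N, (A (i + 1) - A i) • G (i + 1) t)
      (fun t => ∑' i : ℕ, (A (i + 1) - A i) • G (i + 1) t) atTop s := by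
    apply tendstoUniformlyOn_tsum_nat (u := fun i => c * (A i - A (i + 1)))
    · apply Summable.mul_left
      refine summable_aux.of_nonneg_of_le (fun i => ?_) (fun i => ?_)
      · have h1 : ((i : ℝ) + 1) ≤ ((i : ℝ) + 1 + 1) := by linarith
        have := inv_anti₀ (by positivity : (0:ℝ) < (i : ℝ) + 1) h1
        simp only [hAdef]
        push_cast
        linarith [this]
      · have hpos : (0:ℝ) < (i : ℝ) + 1 := by positivity
        have hpos2 : (0:ℝ) < (i : ℝ) + 1 + 1 := by positivity
        simp only [hAdef]
        push_cast
        rw [inv_pow, inv_sub_inv (ne_of_gt hpos) (ne_of_gt hpos2), inv_eq_one_div,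
          div_le_div_iff₀ (by positivity) (by positivity)]
        ring_nf
        nlinarith [sq_nonneg ((i:ℝ)+1)]
    · intro i t htm
      rw [norm_smul, Real.norm_eq_abs]
      have hd : A (i + 1) ≤ A i := by
        have h1 : ((i : ℝ) + 1) ≤ ((i : ℝ) + 1 + 1) := by linarith
        have := inv_anti₀ (by positivity : (0:ℝ) < (i : ℝ) + 1) h1
        simp only [hAdef]
        push_cast
        linarith
      rw [_root_.abs_of_nonpos (by linarith : A (i + 1) - A i ≤ 0)]
      have := hGb t htm (i + 1)
      calc -(A (i + 1) - A i) * ‖G (i + 1) t‖ ≤ -(A (i + 1) - A i) * c := by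
            apply mul_le_mul_of_nonneg_left this (by linarith)
      _ = c * (A i - A (i + 1)) := by ring
  -- combine via summation by parts
  have hsub := hu.sub hv
  have hparts : ∀ (N : ℕ) (t : ℝ),
      ∑ i ∈ range (N + 1), Complex.exp (t * I) ^ (i + 1) / ((i : ℂ) + 1) =
      A N • G (N + 1) t - ∑ i ∈ range N, (A (i + 1) - A i) • G (i + 1) t := by
    intro N t
    have h := Finset.sum_range_by_parts A (fun i => Complex.exp (t * I) ^ (i + 1)) (N + 1)
    simp only [Nat.add_sub_cancel] at h
    calc ∑ i ∈ range (N + 1), Complex.exp (t * I) ^ (i + 1) / ((i : ℂ) + 1)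
        = ∑ i ∈ range (N + 1), A i • Complex.exp (t * I) ^ (i + 1) :=
          Finset.sum_congr rfl fun i _ => (smul_eq_div i _).symm
    _ = _ := h
  have hT1 : TendstoUniformlyOn
      (fun N (t : ℝ) => ∑ i ∈ range (N + 1), Complex.exp (t * I) ^ (i + 1) / ((i : ℂ) + 1))
      ((fun _ : ℝ => (0:ℂ)) - fun t : ℝ => ∑' i : ℕ, (A (i + 1) - A i) • G (i + 1) t) atTop s := by
    refine hsub.congr (Eventually.of_forall fun N t _ => ?_)
    exact (hparts N t).symm
  refine ⟨(fun _ : ℝ => (0:ℂ)) - fun t : ℝ => ∑' i : ℕ, (A (i + 1) - A i) • G (i + 1) t, ?_⟩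
  intro u hu'
  have h := hT1 u hu'
  rw [eventually_atTop] at h ⊢
  obtain ⟨N₀, hN₀⟩ := h
  refine ⟨N₀ + 1, fun N hN => ?_⟩
  obtain ⟨M, rfl⟩ : ∃ M, N = M + 1 := ⟨N - 1, by omega⟩
  exact hN₀ M (by omega)

/-- At every `x` not an integer multiple of `2π`, Clausen's integral is differentiable with
derivative `−log |2 sin (x/2)|`. -/
theorem clausen_hasDerivAt (x : ℝ) (hx : ∀ k : ℤ, x ≠ (k : ℝ) * (2 * Real.pi)) :
    HasDerivAt Cl (-Real.log |2 * Real.sin (x / 2)|) x := by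
  classical
  set c := ‖1 - Complex.exp (x * Complex.I)‖ with hcdef
  have hwx : Complex.exp (x * Complex.I) ≠ 1 := exp_ne_one' x hx
  have hc : 0 < c := norm_pos_iff.mpr (sub_ne_zero.mpr (Ne.symm hwx))
  set s : Set ℝ := {t : ℝ | c / 2 < ‖1 - Complex.exp (t * Complex.I)‖} with hsdef
  have hcont : Continuous fun t : ℝ => ‖1 - Complex.exp (t * Complex.I)‖ := by
    apply continuous_norm.comp
    exact continuous_const.sub (Complex.continuous_exp.comp
      (Complex.continuous_ofReal.mul continuous_const))
  have hso : IsOpen s := isOpen_lt continuous_const hcont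
  have hxs : x ∈ s := by
    simp only [hsdef, Set.mem_setOf_eq, ← hcdef]
    linarith
  have hts : ∀ t ∈ s, ∀ k : ℤ, t ≠ (k : ℝ) * (2 * Real.pi) := by
    intro t htm k hk
    have h1 : Complex.exp (t * Complex.I) = 1 := by
      rw [Complex.exp_eq_one_iff]
      exact ⟨k, by rw [hk]; push_cast; ring⟩
    have h2 : ‖1 - Complex.exp (t * Complex.I)‖ = 0 := by
      rw [h1]; simp
    rw [hsdef, Set.mem_setOf_eq, h2] at htm
    linarith
  have htne : ∀ t ∈ s, Complex.exp (t * Complex.I) ≠ 1 := fun t htm => exp_ne_one' t (hts t htm)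
  have hGb : ∀ t ∈ s, ∀ n, ‖∑ i ∈ range n, Complex.exp (t * Complex.I) ^ (i + 1)‖ ≤ 4 / c := by
    intro t htm n
    refine (geom_bound t (htne t htm) n).trans ?_
    rw [hsdef, Set.mem_setOf_eq] at htm
    rw [div_le_div_iff₀ (lt_trans (by linarith) htm) hc]
    nlinarith [le_of_lt htm]
  obtain ⟨V, hV⟩ := unif_T s (4 / c) (by positivity) hGb
  -- identify the uniform limit
  have hEq : Set.EqOn V (fun t => -Complex.log (1 - Complex.exp (t * Complex.I))) s := by
    intro t htm
    exact tendsto_nhds_unique (hV.tendsto_at htm) (tendsto_partial_complex t (hts t htm))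
  have hTC : TendstoUniformlyOn
      (fun N (t : ℝ) => ∑ i ∈ range N, Complex.exp (t * Complex.I) ^ (i + 1) / ((i : ℂ) + 1))
      (fun t : ℝ => -Complex.log (1 - Complex.exp (t * Complex.I))) atTop s :=
    hV.congr_right hEq
  -- pass to real parts
  have hre : TendstoUniformlyOn
      (fun N => Complex.re ∘ fun t : ℝ => ∑ i ∈ range N, Complex.exp (t * Complex.I) ^ (i + 1) / ((i : ℂ) + 1))
      (Complex.re ∘ fun t : ℝ => -Complex.log (1 - Complex.exp (t * Complex.I))) atTop s :=
    Complex.reCLM.uniformContinuous.comp_tendstoUniformlyOn hTC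
  have hScos : TendstoUniformlyOn
      (fun N (t : ℝ) => ∑ i ∈ range N, Real.cos (((i : ℝ) + 1) * t) / ((i : ℝ) + 1))
      (fun t => -Real.log |2 * Real.sin (t / 2)|) atTop s := by
    refine (hre.congr (Eventually.of_forall fun N t _ => ?_)).congr_right fun t _ => ?_
    · exact (sum_cos_eq_re t N).symm
    · simp only [Function.comp_apply, Complex.neg_re, Complex.log_re, abs_one_sub_exp]
      rw [abs_mul]
      norm_num
  -- derivatives of the partial sums
  have hderiv : ∀ N : ℕ, ∀ t : ℝ, t ∈ s →
      HasDerivAt (fun y => ∑ i ∈ range N, Real.sin (((i : ℝ) + 1) * y) / ((i : ℝ) + 1) ^ 2)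
        (∑ i ∈ range N, Real.cos (((i : ℝ) + 1) * t) / ((i : ℝ) + 1)) t := by
    intro N t _
    apply HasDerivAt.fun_sum
    intro i _
    have ha : ((i : ℝ) + 1) ≠ 0 := by positivity
    have h1 : HasDerivAt (fun y : ℝ => ((i : ℝ) + 1) * y) ((i : ℝ) + 1) t := by
      simpa using (hasDerivAt_id t).const_mul ((i : ℝ) + 1)
    have h2 := (Real.hasDerivAt_sin (((i : ℝ) + 1) * t)).comp t h1
    have h3 := h2.div_const (((i : ℝ) + 1) ^ 2)
    exact h3.congr_deriv (by field_simp)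
  -- pointwise convergence to Cl
  have hpt : ∀ t : ℝ, t ∈ s →
      Tendsto (fun N => ∑ i ∈ range N, Real.sin (((i : ℝ) + 1) * t) / ((i : ℝ) + 1) ^ 2)
        atTop (𝓝 (Cl t)) := by
    intro t _
    have hsum : Summable (fun n : ℕ => Real.sin (((n : ℝ) + 1) * t) / ((n : ℝ) + 1) ^ 2) := by
      apply Summable.of_norm
      refine summable_aux.of_nonneg_of_le (fun n => norm_nonneg _) fun n => ?_
      rw [Real.norm_eq_abs, abs_div, _root_.abs_of_nonneg (by positivity : (0:ℝ) ≤ ((n : ℝ) + 1) ^ 2)]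
      calc |Real.sin (((n : ℝ) + 1) * t)| / ((n : ℝ) + 1) ^ 2
          ≤ 1 / ((n : ℝ) + 1) ^ 2 := by
            gcongr
            exact Real.abs_sin_le_one _
      _ = (((n : ℝ) + 1))⁻¹ ^ 2 := by rw [one_div, inv_pow]
    exact hsum.hasSum.tendsto_sum_nat
  exact hasDerivAt_of_tendstoUniformlyOn hso hScos
    (Eventually.of_forall fun N t htm => hderiv N t htm) hpt hxs
end

section
/- For every positive integer n and every real x, Clausen's integral satisfies the distribution formula (1/n)·Cl(n x) = ∑_{k=0}^{n−1} Cl(x + 2πk/n). -/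
lemma exp_sum_zero (a n : ℕ) (hn : 0 < n) (hna : ¬ n ∣ a) :
    ∑ k ∈ Finset.range n, Complex.exp (2 * Real.pi * a * k / n * Complex.I) = 0 := by
  have hz : ∀ k : ℕ, Complex.exp (2 * Real.pi * a * k / n * Complex.I)
      = (Complex.exp (2 * Real.pi * a / n * Complex.I)) ^ k := by
    intro k; rw [← Complex.exp_nat_mul]; ring_nf
  simp_rw [hz]
  have hn0 : (n : ℂ) ≠ 0 := Nat.cast_ne_zero.mpr hn.ne'
  have hpi : (Real.pi : ℂ) ≠ 0 := by exact_mod_cast Real.pi_ne_zero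
  have hz1 : Complex.exp (2 * Real.pi * a / n * Complex.I) ≠ 1 := by
    intro h
    rw [Complex.exp_eq_one_iff] at h
    obtain ⟨m, hm⟩ := h
    apply hna
    have ha : (a : ℂ) = (m : ℂ) * n := by
      field_simp at hm
      have hI : (2 * (Real.pi : ℂ) * Complex.I) ≠ 0 :=
        mul_ne_zero (mul_ne_zero two_ne_zero hpi) Complex.I_ne_zero
      have h2 : (2 * (Real.pi : ℂ) * Complex.I) * a = (2 * (Real.pi : ℂ) * Complex.I) * ((m : ℂ) * n) := by
        linear_combination (2 * (Real.pi : ℂ) * Complex.I) * hm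
      exact mul_left_cancel₀ hI h2
    have ha' : (a : ℤ) = m * n := by exact_mod_cast ha
    have : (n : ℤ) ∣ (a : ℤ) := ⟨m, by linarith⟩
    exact_mod_cast this
  have hzn : (Complex.exp (2 * Real.pi * a / n * Complex.I)) ^ n = 1 := by
    rw [← Complex.exp_nat_mul, Complex.exp_eq_one_iff]
    refine ⟨a, ?_⟩
    field_simp
    push_cast; ring
  rw [geom_sum_eq hz1 n, hzn]
  simp

lemma sin_sum (a n : ℕ) (hn : 0 < n) (θ : ℝ) :
    ∑ k ∈ Finset.range n, Real.sin (θ + 2 * Real.pi * a * k / n)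
      = if n ∣ a then n * Real.sin θ else 0 := by
  by_cases h : n ∣ a
  · obtain ⟨c, rfl⟩ := h
    rw [if_pos ⟨c, rfl⟩]
    have : ∀ k ∈ Finset.range n, Real.sin (θ + 2 * Real.pi * (n * c) * k / n) = Real.sin θ := by
      intro k _
      have hne : (n : ℝ) ≠ 0 := Nat.cast_ne_zero.mpr hn.ne'
      have heq : θ + 2 * Real.pi * ((n : ℝ) * c) * k / n = θ + (c * k : ℕ) * (2 * Real.pi) := by
        push_cast; field_simp
      rw [heq, Real.sin_add_nat_mul_two_pi]
    rw [Finset.sum_congr rfl fun k hk => by push_cast; exact this k hk]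
    simp
  · rw [if_neg h]
    have key : ∀ k : ℕ, Real.sin (θ + 2 * Real.pi * a * k / n)
        = (Complex.exp (θ * Complex.I) * Complex.exp (2 * Real.pi * a * k / n * Complex.I)).im := by
      intro k
      rw [← Complex.exp_add, ← add_mul]
      rw [show ((θ : ℂ) + 2 * Real.pi * a * k / n) = ((θ + 2 * Real.pi * a * k / n : ℝ) : ℂ) by push_cast; ring]
      rw [Complex.exp_ofReal_mul_I_im]
    simp_rw [key]
    rw [← Complex.im_sum, ← Finset.mul_sum, exp_sum_zero a n hn h, mul_zero]
    simp

lemma summable_cl (x : ℝ) :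
    Summable (fun m : ℕ => Real.sin (((m : ℝ) + 1) * x) / ((m : ℝ) + 1) ^ 2) := by
  have hs : Summable (fun m : ℕ => 1 / ((m : ℝ) + 1) ^ 2) := by
    have h := Real.summable_one_div_nat_pow.mpr (show 1 < 2 by norm_num)
    have h2 := (summable_nat_add_iff 1).mpr h
    apply h2.congr
    intro m
    push_cast
    ring
  apply Summable.of_norm
  refine Summable.of_nonneg_of_le (fun m => norm_nonneg _) (fun m => ?_) hs
  have hpos : (0:ℝ) < ((m : ℝ) + 1) ^ 2 := by positivity
  rw [norm_div, div_le_div_iff₀ (by rw [Real.norm_eq_abs, abs_of_pos hpos]; exact hpos) hpos]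
  have : ‖((m : ℝ) + 1) ^ 2‖ = ((m : ℝ) + 1) ^ 2 := by
    rw [Real.norm_eq_abs, abs_of_pos hpos]
  rw [this]
  have h1 : ‖Real.sin (((m : ℝ) + 1) * x)‖ ≤ 1 := by
    rw [Real.norm_eq_abs]; exact Real.abs_sin_le_one _
  nlinarith [hpos]

/-- The distribution formula for Clausen's integral:
`(1/n) Cl (n x) = ∑_{k=0}^{n−1} Cl (x + 2πk/n)`. -/
theorem clausen_distribution (n : ℕ) (hn : 0 < n) (x : ℝ) :
    (1 / (n : ℝ)) * Cl ((n : ℝ) * x) =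
      ∑ k ∈ Finset.range n, Cl (x + 2 * Real.pi * (k : ℝ) / (n : ℝ)) := by
  have hn0 : (n : ℝ) ≠ 0 := Nat.cast_ne_zero.mpr hn.ne'
  unfold Cl
  -- RHS: swap sums
  rw [← Summable.tsum_finsetSum (f := fun (k : ℕ) (m : ℕ) =>
    Real.sin (((m : ℝ) + 1) * (x + 2 * Real.pi * (k : ℝ) / (n : ℝ))) / ((m : ℝ) + 1) ^ 2)
    (s := Finset.range n) (fun k _ => summable_cl _)]
  -- simplify inner finite sum
  have hinner : ∀ m : ℕ,
      ∑ k ∈ Finset.range n,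
        Real.sin (((m : ℝ) + 1) * (x + 2 * Real.pi * (k : ℝ) / (n : ℝ))) / ((m : ℝ) + 1) ^ 2
      = (if n ∣ (m + 1) then (n : ℝ) * Real.sin (((m : ℝ) + 1) * x) else 0) / ((m : ℝ) + 1) ^ 2 := by
    intro m
    rw [← Finset.sum_div]
    congr 1
    have harg : ∀ k : ℕ, ((m : ℝ) + 1) * (x + 2 * Real.pi * (k : ℝ) / (n : ℝ))
        = ((m : ℝ) + 1) * x + 2 * Real.pi * ((m + 1 : ℕ) : ℝ) * (k : ℝ) / (n : ℝ) := by
      intro k; push_cast; field_simp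
    simp_rw [harg]
    exact sin_sum (m + 1) n hn (((m : ℝ) + 1) * x)
  simp_rw [hinner]
  -- LHS
  rw [← tsum_mul_left]
  -- reindex
  set f : ℕ → ℝ := fun m =>
    (if n ∣ (m + 1) then (n : ℝ) * Real.sin (((m : ℝ) + 1) * x) else 0) / ((m : ℝ) + 1) ^ 2 with hf
  have hinj : Function.Injective (fun j : ℕ => n * (j + 1) - 1) := by
    intro a b hab
    simp only at hab
    have ha : 1 ≤ n * (a + 1) := Nat.mul_pos hn a.succ_pos
    have hb : 1 ≤ n * (b + 1) := Nat.mul_pos hn b.succ_pos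
    have : n * (a + 1) = n * (b + 1) := by omega
    have := Nat.eq_of_mul_eq_mul_left hn this
    omega
  have hsupp : Function.support f ⊆ Set.range (fun j : ℕ => n * (j + 1) - 1) := by
    intro m hm
    simp only [hf, Function.mem_support] at hm
    by_cases hd : n ∣ (m + 1)
    · obtain ⟨c, hc⟩ := hd
      have hc1 : 1 ≤ c := by nlinarith [hn]
      refine ⟨c - 1, ?_⟩
      show n * (c - 1 + 1) - 1 = m
      rw [Nat.sub_add_cancel hc1]
      omega
    · simp [hd] at hm
  rw [← Function.Injective.tsum_eq hinj hsupp]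
  apply tsum_congr
  intro j
  have he : (n * (j + 1) - 1) + 1 = n * (j + 1) := by
    have := Nat.mul_pos hn (show 0 < j + 1 by omega)
    omega
  have hed : n ∣ ((n * (j + 1) - 1) + 1) := by rw [he]; exact ⟨j + 1, rfl⟩
  have hcast : ((n * (j + 1) - 1 : ℕ) : ℝ) + 1 = (n : ℝ) * ((j : ℝ) + 1) := by
    rw [show ((n * (j + 1) - 1 : ℕ) : ℝ) + 1 = (((n * (j + 1) - 1) + 1 : ℕ) : ℝ) by push_cast; ring,
      he]
    push_cast; ring
  simp only [hf, if_pos hed, hcast]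
  field_simp
end

section
/- For every real x, Clausen's integral satisfies the double-angle formula (1/2)·Cl(2x) = Cl(x) − Cl(π − x). -/
open Real

theorem tsum_sub_tsum_alternating_eq_two_mul_tsum_odd {α : Type*} [Ring α] [UniformSpace α]
    [IsUniformAddGroup α] [CompleteSpace α] [T2Space α] {f : ℕ → α} (hf : Summable f) :
    ∑' n, f n - ∑' n, (-1) ^ n * f n = 2 * ∑' k, f (2 * k + 1) := by
  have heven : Summable fun k ↦ f (2 * k) :=
    hf.comp_injective (mul_right_injective₀ two_ne_zero)
  have hodd : Summable fun k ↦ f (2 * k + 1) :=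
    hf.comp_injective ((add_left_injective 1).comp (mul_right_injective₀ two_ne_zero))
  have hsign_even (k : ℕ) : (-1 : α) ^ (2 * k) = 1 := by rw [pow_mul, neg_one_sq, one_pow]
  have hsign_odd (k : ℕ) : (-1 : α) ^ (2 * k + 1) = -1 := by rw [pow_succ, hsign_even, one_mul]
  rw [← tsum_even_add_odd heven hodd, ← tsum_even_add_odd (f := fun n ↦ (-1) ^ n * f n)]
  · simp only [hsign_even, hsign_odd, one_mul, neg_one_mul, tsum_neg]
    rw [add_sub_add_left_eq_sub, sub_neg_eq_add, two_mul]
  · simpa only [hsign_even, one_mul] using heven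
  · simpa only [hsign_odd, neg_one_mul] using hodd.neg

noncomputable def clausenTerm (x : ℝ) (n : ℕ) : ℝ := sin ((n + 1) * x) / ((n : ℝ) + 1) ^ 2

theorem Cl_eq_tsum_clausenTerm (x : ℝ) : Cl x = ∑' n, clausenTerm x n := rfl

theorem summable_clausenTerm (x : ℝ) : Summable (clausenTerm x) := by
  refine .of_norm_bounded
    ((summable_nat_add_iff 1).mpr (summable_one_div_nat_pow.mpr one_lt_two)) fun n ↦ ?_
  rw [clausenTerm, Real.norm_eq_abs, abs_div, abs_sq]
  push_cast
  gcongr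
  exact abs_sin_le_one _

theorem clausenTerm_pi_sub (x : ℝ) (n : ℕ) :
    clausenTerm (π - x) n = (-1) ^ n * clausenTerm x n := by
  rw [clausenTerm, clausenTerm, mul_sub, ← Nat.cast_succ, sin_nat_mul_pi_sub, pow_succ]
  push_cast
  ring

theorem clausenTerm_two_mul_add_one (x : ℝ) (k : ℕ) :
    clausenTerm x (2 * k + 1) = clausenTerm (2 * x) k / 4 := by
  simp only [clausenTerm]
  push_cast
  rw [show (2 * k + 1 + 1 : ℝ) = 2 * (k + 1) by ring, mul_right_comm, mul_comm 2 x]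
  field_simp
  ring

/-- The double-angle formula for Clausen's integral: `(1/2) Cl (2x) = Cl x − Cl (π − x)`. -/
theorem clausen_double_angle (x : ℝ) :
    (1 / 2 : ℝ) * Cl (2 * x) = Cl x - Cl (Real.pi - x) := by
  simp only [Cl_eq_tsum_clausenTerm, clausenTerm_pi_sub,
    tsum_sub_tsum_alternating_eq_two_mul_tsum_odd (summable_clausenTerm x),
    clausenTerm_two_mul_add_one, tsum_div_const]
  ring
end

section
/- For every θ with 0 < θ < π and every real x, one has the strict inequality F_θ(x) + F_θ(−x) > (π − θ)·|x|. -/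
open MeasureTheory

lemma zim (θ ξ : ℝ) : (1 - Complex.exp (ξ + θ * Complex.I)).im = -(Real.exp ξ * Real.sin θ) := by
  simp [Complex.exp_im]

lemma zre (θ ξ : ℝ) : (1 - Complex.exp (ξ + θ * Complex.I)).re = 1 - Real.exp ξ * Real.cos θ := by
  simp [Complex.exp_re]

lemma angle_cancel {a b : ℝ} (h : (a : Real.Angle) = (b : Real.Angle))
    (hab : |a - b| < 2 * Real.pi) : a = b := by
  obtain ⟨k, hk⟩ := Real.Angle.angle_eq_iff_two_pi_dvd_sub.1 h
  have hk0 : k = 0 := by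
    have h1 : |(k : ℝ)| < 1 := by
      rw [hk] at hab
      rw [abs_mul, abs_of_pos (by positivity : (0:ℝ) < 2 * Real.pi)] at hab
      nlinarith [Real.pi_pos, abs_nonneg ((k:ℝ))]
    have h2 : (-1:ℝ) < k ∧ (k:ℝ) < 1 := abs_lt.1 h1
    have : (-1:ℤ) < k ∧ k < 1 := ⟨by exact_mod_cast h2.1, by exact_mod_cast h2.2⟩
    omega
  rw [hk0] at hk; push_cast at hk; linarith

lemma arg_mem (θ : ℝ) (hθ0 : 0 < θ) (hθπ : θ < Real.pi) (ξ : ℝ) :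
    (1 - Complex.exp (ξ + θ * Complex.I)).arg ∈ Set.Ioo (θ - Real.pi) 0 := by
  have hsin : 0 < Real.sin θ := Real.sin_pos_of_pos_of_lt_pi hθ0 hθπ
  set z := 1 - Complex.exp (ξ + θ * Complex.I) with hzdef
  have him : z.im < 0 := by
    rw [zim]; nlinarith [Real.exp_pos ξ]
  have hz : z ≠ 0 := by
    intro h; rw [h] at him; simp at him
  have hargneg : z.arg < 0 := Complex.arg_neg_iff.2 him
  refine ⟨?_, hargneg⟩
  set u := z * Complex.exp ((Real.pi - θ : ℝ) * Complex.I) with hudef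
  have hwre : (Complex.exp ((Real.pi - θ : ℝ) * Complex.I)).re = Real.cos (Real.pi - θ) := by
    simp [Complex.exp_re]
  have hwim : (Complex.exp ((Real.pi - θ : ℝ) * Complex.I)).im = Real.sin (Real.pi - θ) := by
    simp [Complex.exp_im]
  have huim : u.im = Real.sin θ := by
    rw [hudef, Complex.mul_im, hwre, hwim, zim, zre, Real.sin_pi_sub, Real.cos_pi_sub]
    ring
  have hu : u ≠ 0 := by
    intro h
    have : u.im = 0 := by rw [h]; simp
    rw [huim] at this; linarith
  have hupos : 0 < u.arg := by
    rcases lt_or_eq_of_le (Complex.arg_nonneg_iff.2 (by rw [huim]; exact hsin.le)) with h | h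
    · exact h
    · exfalso
      have := (Complex.arg_eq_zero_iff.1 h.symm).2
      rw [huim] at this; linarith
  have hult : u.arg < Real.pi := by
    rcases lt_or_eq_of_le (Complex.arg_le_pi u) with h | h
    · exact h
    · exfalso
      have := (Complex.arg_eq_pi_iff.1 h).2
      rw [huim] at this; linarith
  have hwarg : (Complex.exp ((Real.pi - θ : ℝ) * Complex.I)).arg = Real.pi - θ := by
    rw [Complex.exp_mul_I]
    exact Complex.arg_cos_add_sin_mul_I ⟨by linarith [Real.pi_pos], by linarith⟩
  have hangle : (u.arg : Real.Angle) = ((z.arg + (Real.pi - θ) : ℝ) : Real.Angle) := by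
    rw [hudef, Complex.arg_mul_coe_angle hz (Complex.exp_ne_zero _), hwarg]
    rw [Real.Angle.coe_add]
  have heq : u.arg = z.arg + (Real.pi - θ) := by
    apply angle_cancel hangle
    have h1 : -Real.pi < z.arg := Complex.neg_pi_lt_arg z
    rw [abs_lt]; constructor <;> nlinarith [Real.pi_pos]
  linarith

/-- `F θ x = ∫_{−∞}^x f θ ξ dξ`. -/
noncomputable def F (θ x : ℝ) : ℝ := ∫ ξ in Set.Iic x, f θ ξ

lemma f_pos (θ : ℝ) (hθ0 : 0 < θ) (hθπ : θ < Real.pi) (ξ : ℝ) : 0 < f θ ξ := by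
  have := (arg_mem θ hθ0 hθπ ξ).2
  unfold f; linarith

lemma f_add (θ : ℝ) (hθ0 : 0 < θ) (hθπ : θ < Real.pi) (ξ : ℝ) :
    f θ ξ + f θ (-ξ) = Real.pi - θ := by
  have hmem := arg_mem θ hθ0 hθπ ξ
  have hmem' := arg_mem θ hθ0 hθπ (-ξ)
  set z := 1 - Complex.exp (ξ + θ * Complex.I) with hzdef
  have hz : z ≠ 0 := by
    intro h
    have : z.im = 0 := by rw [h]; simp
    rw [zim] at this
    nlinarith [Real.exp_pos ξ, Real.sin_pos_of_pos_of_lt_pi hθ0 hθπ]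
  set w := 1 - Complex.exp ((-ξ : ℝ) + θ * Complex.I) with hwdef
  have hconj : (starRingEnd ℂ) z = 1 - Complex.exp (ξ - θ * Complex.I) := by
    rw [hzdef, map_sub, map_one, ← Complex.exp_conj, map_add, map_mul,
      Complex.conj_ofReal, Complex.conj_ofReal, Complex.conj_I]
    ring_nf
  have hfac : w = -Complex.exp ((-ξ : ℝ) + θ * Complex.I) * (starRingEnd ℂ) z := by
    rw [hconj, hwdef, neg_mul, mul_sub, mul_one, ← Complex.exp_add]
    have h0 : ((-ξ : ℝ) : ℂ) + θ * Complex.I + ((ξ : ℝ) - θ * Complex.I) = 0 := by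
      push_cast; ring
    rw [h0, Complex.exp_zero]; ring
  have hnegexp : (-Complex.exp ((-ξ : ℝ) + θ * Complex.I)).arg = θ - Real.pi := by
    have hrw : -Complex.exp ((-ξ : ℝ) + θ * Complex.I)
        = (Real.exp (-ξ) : ℂ) * Complex.exp ((θ - Real.pi : ℝ) * Complex.I) := by
      rw [Complex.ofReal_exp, ← Complex.exp_add]
      rw [show ((-ξ : ℝ) : ℂ) + (θ : ℂ) * Complex.I
          = (((-ξ : ℝ) : ℂ) + ((θ - Real.pi : ℝ) : ℂ) * Complex.I) + (Real.pi : ℂ) * Complex.I by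
        push_cast; ring]
      rw [Complex.exp_add, Complex.exp_pi_mul_I]
      ring
    rw [hrw, Complex.exp_mul_I]
    exact Complex.arg_mul_cos_add_sin_mul_I (Real.exp_pos _)
      ⟨by linarith, by linarith [Real.pi_pos]⟩
  have hangle : (w.arg : Real.Angle) = ((θ - Real.pi - z.arg : ℝ) : Real.Angle) := by
    rw [hfac, Complex.arg_mul_coe_angle (by simpa using Complex.exp_ne_zero (((-ξ : ℝ) : ℂ) + θ * Complex.I))
      (by simpa using hz), hnegexp, Complex.arg_conj_coe_angle]
    rw [sub_eq_add_neg (θ - Real.pi), Real.Angle.coe_add, Real.Angle.coe_neg]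
  have heq : w.arg = θ - Real.pi - z.arg := by
    apply angle_cancel hangle
    obtain ⟨h1, h2⟩ := hmem
    obtain ⟨h3, h4⟩ := hmem'
    rw [abs_lt]; constructor <;> nlinarith [Real.pi_pos]
  show -z.arg + -w.arg = Real.pi - θ
  rw [heq]; ring

lemma f_cont (θ : ℝ) (hθ0 : 0 < θ) (hθπ : θ < Real.pi) : Continuous (f θ) := by
  have hsin : 0 < Real.sin θ := Real.sin_pos_of_pos_of_lt_pi hθ0 hθπ
  rw [continuous_iff_continuousAt]
  intro ξ
  have h1 : Continuous (fun x : ℝ => 1 - Complex.exp (x + θ * Complex.I)) := by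
    fun_prop
  have hmem : (1 - Complex.exp (ξ + θ * Complex.I)) ∈ Complex.slitPlane := by
    rw [Complex.mem_slitPlane_iff]
    right
    rw [zim]
    nlinarith [Real.exp_pos ξ]
  have h2 : ContinuousAt (fun x : ℝ => (1 - Complex.exp (x + θ * Complex.I)).arg) ξ :=
    ContinuousAt.comp (g := Complex.arg)
      (f := fun x : ℝ => 1 - Complex.exp (x + θ * Complex.I))
      (Complex.continuousAt_arg hmem) h1.continuousAt
  exact h2.neg

lemma f_le (θ : ℝ) (hθ0 : 0 < θ) (hθπ : θ < Real.pi) {ξ : ℝ} (hξ : ξ ≤ -1) :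
    f θ ξ ≤ Real.pi * Real.exp ξ := by
  have hsin : 0 < Real.sin θ := Real.sin_pos_of_pos_of_lt_pi hθ0 hθπ
  set z := 1 - Complex.exp (ξ + θ * Complex.I) with hzdef
  have he : Real.exp ξ ≤ Real.exp (-1) := Real.exp_le_exp.2 hξ
  have he2 : Real.exp (-1) ≤ 1 / 2 := by
    rw [Real.exp_neg]
    have h1 := Real.add_one_le_exp 1
    rw [inv_le_comm₀ (Real.exp_pos 1) (by norm_num)]
    linarith
  have hrepos : (1 : ℝ) / 2 ≤ z.re := by
    rw [zre]
    nlinarith [Real.cos_le_one θ, Real.exp_pos ξ, Real.neg_one_le_cos θ]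
  have habs : (1 : ℝ) / 2 ≤ ‖z‖ := le_trans hrepos (Complex.re_le_norm z)
  have harg2 : |z.arg| ≤ Real.pi / 2 := Complex.abs_arg_le_pi_div_two_iff.2 (by linarith)
  have hf0 : 0 ≤ f θ ξ := (f_pos θ hθ0 hθπ ξ).le
  have hfle : f θ ξ ≤ Real.pi / 2 := by
    have := (abs_le.1 harg2).1
    show -z.arg ≤ _
    linarith
  have hsinf : Real.sin (f θ ξ) = Real.exp ξ * Real.sin θ / ‖z‖ := by
    show Real.sin (-z.arg) = _
    rw [Real.sin_neg, Complex.sin_arg, zim, neg_div, neg_neg]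
  have hsle : Real.sin (f θ ξ) ≤ 2 * Real.exp ξ := by
    rw [hsinf, div_le_iff₀ (by linarith : (0 : ℝ) < ‖z‖)]
    nlinarith [Real.sin_le_one θ, Real.exp_pos ξ]
  have hms := Real.mul_le_sin hf0 hfle
  have h3 : 2 / Real.pi * f θ ξ ≤ 2 * Real.exp ξ := hms.trans hsle
  rw [div_mul_eq_mul_div, div_le_iff₀ Real.pi_pos] at h3
  linarith

lemma f_integrableOn (θ : ℝ) (hθ0 : 0 < θ) (hθπ : θ < Real.pi) (x : ℝ) :
    IntegrableOn (f θ) (Set.Iic x) := by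
  have h1 : IntegrableOn (f θ) (Set.Iic (-1 : ℝ)) := by
    have hg : IntegrableOn (fun ξ => Real.pi * Real.exp ξ) (Set.Iic (-1 : ℝ)) :=
      (integrableOn_exp_Iic (-1)).const_mul Real.pi
    apply Integrable.mono hg ((f_cont θ hθ0 hθπ).aestronglyMeasurable.restrict)
    filter_upwards [ae_restrict_mem measurableSet_Iic] with ξ hξ
    rw [Real.norm_eq_abs, Real.norm_eq_abs, abs_of_nonneg (f_pos θ hθ0 hθπ ξ).le,
      abs_of_nonneg (by positivity)]
    exact f_le θ hθ0 hθπ hξ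
  have h2 : IntegrableOn (f θ) (Set.Icc (-1 : ℝ) x) :=
    (f_cont θ hθ0 hθπ).integrableOn_Icc
  apply (h1.union h2).mono_set
  intro t ht
  rcases le_total t (-1 : ℝ) with h | h
  · exact Or.inl h
  · exact Or.inr ⟨h, ht⟩

lemma main_nonneg (θ : ℝ) (hθ0 : 0 < θ) (hθπ : θ < Real.pi) {x : ℝ} (hx : 0 ≤ x) :
    (Real.pi - θ) * x < F θ x + F θ (-x) := by
  have hI1 := f_integrableOn θ hθ0 hθπ x
  have hI2 := f_integrableOn θ hθ0 hθπ (-x)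
  have hsplit : F θ x = F θ (-x) + ∫ ξ in Set.Ioc (-x) x, f θ ξ := by
    have hu : Set.Iic (-x) ∪ Set.Ioc (-x) x = Set.Iic x := Set.Iic_union_Ioc_eq_Iic (by linarith)
    rw [F, ← hu, MeasureTheory.setIntegral_union (Set.Iic_disjoint_Ioc le_rfl) measurableSet_Ioc
      hI2 (hI1.mono_set Set.Ioc_subset_Iic_self)]
    rfl
  have hmid : (∫ ξ in Set.Ioc (-x) x, f θ ξ) = (Real.pi - θ) * x := by
    rw [← intervalIntegral.integral_of_le (by linarith : -x ≤ x)]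
    have hii : IntervalIntegrable (f θ) volume (-x) x :=
      (f_cont θ hθ0 hθπ).intervalIntegrable _ _
    have hii2 : IntervalIntegrable (fun ξ => f θ (-ξ)) volume (-x) x :=
      ((f_cont θ hθ0 hθπ).comp continuous_neg).intervalIntegrable _ _
    have h1 : (∫ ξ in (-x)..x, f θ (-ξ)) = ∫ ξ in (-x)..x, f θ ξ := by
      rw [intervalIntegral.integral_comp_neg (f θ), neg_neg]
    have h2 : (∫ ξ in (-x)..x, (f θ ξ + f θ (-ξ))) = (Real.pi - θ) * (2 * x) := by
      have hcg : Set.EqOn (fun ξ => f θ ξ + f θ (-ξ)) (fun _ => Real.pi - θ)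
          (Set.uIcc (-x) x) := fun ξ _ => f_add θ hθ0 hθπ ξ
      rw [intervalIntegral.integral_congr hcg, intervalIntegral.integral_const, smul_eq_mul]
      ring
    rw [intervalIntegral.integral_add hii hii2, h1] at h2
    linarith
  have hFpos : 0 < F θ (-x) := by
    rw [F, MeasureTheory.setIntegral_pos_iff_support_of_nonneg_ae
      (by filter_upwards with ξ using (f_pos θ hθ0 hθπ ξ).le) hI2]
    have hsup : Function.support (f θ) ∩ Set.Iic (-x) = Set.Iic (-x) :=
      Set.inter_eq_self_of_subset_right (fun t _ => (f_pos θ hθ0 hθπ t).ne')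
    rw [hsup, Real.volume_Iic]
    simp
  linarith

/-- For `0 < θ < π` and all real `x`, `F θ x + F θ (−x) > (π − θ) |x|`. -/
theorem FTheta_lower_bound (θ : ℝ) (hθ0 : 0 < θ) (hθπ : θ < Real.pi) (x : ℝ) :
    (Real.pi - θ) * |x| < F θ x + F θ (-x) := by
  rcases le_total 0 x with h | h
  · rw [abs_of_nonneg h]
    exact main_nonneg θ hθ0 hθπ h
  · rw [abs_of_nonpos h]
    have := main_nonneg θ hθ0 hθπ (neg_nonneg.2 h)
    rw [neg_neg] at this
    linarith
end

section
/- Let θ satisfy 0 < θ < π, set θ* := π − θ, and let ρ_1, ρ_2 be arbitrary real numbers. Define φ_1 := f_θ(ρ_2 − ρ_1) + f_{θ*}(ρ_2 + ρ_1) and φ_2 := f_θ(ρ_1 − ρ_2) + f_{θ*}(ρ_1 + ρ_2). Then φ_1 > 0, φ_2 > 0, θ* < φ_1 + φ_2 < 2π − θ*, and ρ_1 = (1/2)·log[ ( sin((−θ* + φ_1 + φ_2)/2) · sin((θ* − φ_1 + φ_2)/2) ) / ( sin((θ* + φ_1 + φ_2)/2) · sin((θ* + φ_1 − φ_2)/2)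 ) ]. (This is the inverse relation between the half-angles and the transformed radii ρ = log tan(r/2) of a spherical triangle with two sides r_1, r_2 ∈ (0, π) and included angle θ.) -/
lemma f_key (θ x : ℝ) (h0 : 0 < θ) (hπ : θ < Real.pi) :
    0 < f θ x ∧ f θ x < Real.pi - θ ∧
    Real.sin (f θ x) = Real.exp x * Real.sin (θ + f θ x) := by
  set w : ℂ := 1 - Complex.exp (x + θ * Complex.I) with hw
  have hre : w.re = 1 - Real.exp x * Real.cos θ := by
    simp [hw, Complex.exp_re]
  have him : w.im = -(Real.exp x * Real.sin θ) := by
    simp [hw, Complex.exp_im]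
  have hsθ : 0 < Real.sin θ := Real.sin_pos_of_pos_of_lt_pi h0 hπ
  have him_neg : w.im < 0 := by
    rw [him]
    nlinarith [Real.exp_pos x]
  have hw0 : w ≠ 0 := by
    intro h
    rw [h] at him_neg
    simp at him_neg
  have habs : 0 < ‖w‖ := norm_pos_iff.mpr hw0
  have harg_neg : w.arg < 0 := Complex.arg_neg_iff.mpr him_neg
  have harg_gt : -Real.pi < w.arg := Complex.neg_pi_lt_arg w
  have hf : f θ x = -w.arg := rfl
  have hf0 : 0 < f θ x := by rw [hf]; linarith
  have hfπ : f θ x < Real.pi := by rw [hf]; linarith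
  have hsf : Real.sin (f θ x) = Real.exp x * Real.sin θ / ‖w‖ := by
    rw [hf, Real.sin_neg, Complex.sin_arg, him]
    field_simp
  have hcf : Real.cos (f θ x) = (1 - Real.exp x * Real.cos θ) / ‖w‖ := by
    rw [hf, Real.cos_neg, Complex.cos_arg hw0, hre]
  have hsum : Real.sin (θ + f θ x) = Real.sin θ / ‖w‖ := by
    rw [Real.sin_add, hsf, hcf]
    field_simp
    ring
  have hmain : Real.sin (f θ x) = Real.exp x * Real.sin (θ + f θ x) := by
    rw [hsf, hsum]; ring
  have hsum_pos : 0 < Real.sin (θ + f θ x) := by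
    rw [hsum]; positivity
  have hflt : f θ x < Real.pi - θ := by
    by_contra h
    push_neg at h
    have h1 : 0 ≤ θ + f θ x - Real.pi := by linarith
    have h2 : θ + f θ x - Real.pi ≤ Real.pi := by linarith [Real.pi_pos]
    have hnn := Real.sin_nonneg_of_nonneg_of_le_pi h1 h2
    have heq := Real.sin_add_pi (θ + f θ x - Real.pi)
    rw [show θ + f θ x - Real.pi + Real.pi = θ + f θ x by ring] at heq
    linarith
  exact ⟨hf0, hflt, hmain⟩

/-- Inverse relation between the half-angles `φ₁, φ₂` and transformed radii
`ρ = log tan (r/2)` of a spherical triangle with included angle `θ`. -/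
theorem spherical_triangle_inverse_relation (θ : ℝ) (hθ0 : 0 < θ) (hθπ : θ < Real.pi)
    (ρ₁ ρ₂ : ℝ) :
    0 < f θ (ρ₂ - ρ₁) + f (Real.pi - θ) (ρ₂ + ρ₁) ∧
    0 < f θ (ρ₁ - ρ₂) + f (Real.pi - θ) (ρ₁ + ρ₂) ∧
    Real.pi - θ <
      (f θ (ρ₂ - ρ₁) + f (Real.pi - θ) (ρ₂ + ρ₁))
        + (f θ (ρ₁ - ρ₂) + f (Real.pi - θ) (ρ₁ + ρ₂)) ∧
    (f θ (ρ₂ - ρ₁) + f (Real.pi - θ) (ρ₂ + ρ₁))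
        + (f θ (ρ₁ - ρ₂) + f (Real.pi - θ) (ρ₁ + ρ₂)) < 2 * Real.pi - (Real.pi - θ) ∧
    ρ₁ = (1 / 2) * Real.log
      ((Real.sin ((-(Real.pi - θ) + (f θ (ρ₂ - ρ₁) + f (Real.pi - θ) (ρ₂ + ρ₁))
            + (f θ (ρ₁ - ρ₂) + f (Real.pi - θ) (ρ₁ + ρ₂))) / 2) *
        Real.sin (((Real.pi - θ) - (f θ (ρ₂ - ρ₁) + f (Real.pi - θ) (ρ₂ + ρ₁))
            + (f θ (ρ₁ - ρ₂) + f (Real.pi - θ) (ρ₁ + ρ₂))) / 2)) /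
       (Real.sin (((Real.pi - θ) + (f θ (ρ₂ - ρ₁) + f (Real.pi - θ) (ρ₂ + ρ₁))
            + (f θ (ρ₁ - ρ₂) + f (Real.pi - θ) (ρ₁ + ρ₂))) / 2) *
        Real.sin (((Real.pi - θ) + (f θ (ρ₂ - ρ₁) + f (Real.pi - θ) (ρ₂ + ρ₁))
            - (f θ (ρ₁ - ρ₂) + f (Real.pi - θ) (ρ₁ + ρ₂))) / 2))) := by
  rw [add_comm ρ₂ ρ₁]
  set a := f θ (ρ₂ - ρ₁) with hadef
  set c := f θ (ρ₁ - ρ₂) with hcdef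
  set b := f (Real.pi - θ) (ρ₁ + ρ₂) with hbdef
  obtain ⟨ha0, ha1, ha2⟩ := f_key θ (ρ₂ - ρ₁) hθ0 hθπ
  obtain ⟨hc0, hc1, hc2⟩ := f_key θ (ρ₁ - ρ₂) hθ0 hθπ
  obtain ⟨hb0, hb1, hb2⟩ :=
    f_key (Real.pi - θ) (ρ₁ + ρ₂) (by linarith) (by linarith)
  have hb1' : b < θ := by linarith
  have hπ := Real.pi_pos
  -- the key relation a + c = π - θ
  have he : Real.exp (ρ₂ - ρ₁) * Real.exp (ρ₁ - ρ₂) = 1 := by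
    rw [← Real.exp_add]; norm_num
  have hmul : Real.sin a * Real.sin c = Real.sin (θ + a) * Real.sin (θ + c) := by
    rw [ha2, hc2]
    linear_combination Real.sin (θ + a) * Real.sin (θ + c) * he
  have hexpand : Real.sin (θ + (a + c)) * Real.sin θ
      = Real.sin (θ + a) * Real.sin (θ + c) - Real.sin a * Real.sin c := by
    rw [show θ + (a + c) = (θ + a) + c by ring, Real.sin_add (θ + a) c,
      Real.sin_add θ a, Real.sin_add θ c, Real.cos_add θ a]
    linear_combination (-(Real.sin a * Real.sin c)) * Real.sin_sq_add_cos_sq θ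
  have hzero : Real.sin (θ + (a + c)) = 0 := by
    have hsθ : Real.sin θ ≠ 0 := ne_of_gt (Real.sin_pos_of_pos_of_lt_pi hθ0 hθπ)
    have : Real.sin (θ + (a + c)) * Real.sin θ = 0 := by rw [hexpand, hmul]; ring
    exact (mul_eq_zero.mp this).resolve_right hsθ
  have hac : a + c = Real.pi - θ := by
    obtain ⟨n, hn⟩ := Real.sin_eq_zero_iff.mp hzero
    have hlb : (0 : ℝ) < (n : ℝ) * Real.pi := by rw [hn]; linarith
    have hub : (n : ℝ) * Real.pi < 2 * Real.pi := by rw [hn]; linarith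
    have hn0 : (0 : ℝ) < (n : ℝ) := by nlinarith
    have hn2 : ((n : ℝ)) < 2 := by nlinarith
    have hn0' : 0 < n := by exact_mod_cast hn0
    have hn2' : n < 2 := by exact_mod_cast hn2
    have : n = 1 := by omega
    rw [this] at hn
    push_cast at hn
    linarith
  refine ⟨by linarith, by linarith, by linarith, by linarith, ?_⟩
  -- simplify the four sine arguments
  rw [show (-(Real.pi - θ) + (a + b) + (c + b)) / 2 = b by linarith,
    show ((Real.pi - θ) - (a + b) + (c + b)) / 2 = c by linarith,
    show ((Real.pi - θ) + (a + b) + (c + b)) / 2 = Real.pi - (θ - b) by linarith,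
    show ((Real.pi - θ) + (a + b) - (c + b)) / 2 = a by linarith,
    Real.sin_pi_sub]
  have hsa : 0 < Real.sin a := Real.sin_pos_of_pos_of_lt_pi ha0 (by linarith)
  have hstb : 0 < Real.sin (θ - b) :=
    Real.sin_pos_of_pos_of_lt_pi (by linarith) (by linarith)
  have hb2' : Real.sin b = Real.exp (ρ₁ + ρ₂) * Real.sin (θ - b) := by
    rw [hb2, show Real.pi - θ + b = Real.pi - (θ - b) by ring, Real.sin_pi_sub]
  have hc2' : Real.sin c = Real.exp (ρ₁ - ρ₂) * Real.sin a := by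
    rw [hc2, show θ + c = Real.pi - a by linarith, Real.sin_pi_sub]
  have hratio : (Real.sin b * Real.sin c) / (Real.sin (θ - b) * Real.sin a)
      = Real.exp (2 * ρ₁) := by
    rw [hb2', hc2']
    rw [show Real.exp (ρ₁ + ρ₂) * Real.sin (θ - b) * (Real.exp (ρ₁ - ρ₂) * Real.sin a)
        = (Real.exp (ρ₁ + ρ₂) * Real.exp (ρ₁ - ρ₂)) * (Real.sin (θ - b) * Real.sin a)
        by ring, ← Real.exp_add, show ρ₁ + ρ₂ + (ρ₁ - ρ₂) = 2 * ρ₁ by ring]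
    field_simp
  rw [hratio, Real.log_exp]
  ring
end

section
/- Define V(α_1, α_2, α_3) := (1/2)·( Cl(2α_1) + Cl(2α_2) + Cl(2α_3) + Cl(π + α_1 − α_2 − α_3) + Cl(π − α_1 + α_2 − α_3) + Cl(π − α_1 − α_2 + α_3) + Cl(π − α_1 − α_2 − α_3) ). Then for all α_1, α_2, α_3 > 0 with α_1 + α_2 + α_3 < π, the function V is differentiable at (α_1, α_2, α_3) and (∂/∂α_2 + ∂/∂α_3) V(α_1, α_2, α_3) = log[ ( cos((α_1 + α_2 + α_3)/2) · cos((−α_1 + α_2 + α_3)/2) ) / ( sin α_2 · sin α_3 ) ], which equals 2·log sinh(a_1/2), where a_1 > 0 is the length of the side opposite α_1 in the hyperbolic triangle with angles α_1, α_2, α_3, i.e. cosh a_1 = (cos α_2 cos α_3 + cos α_1)/(sin α_2 sin α_3). -/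
/-- Leibon's volume function: the hyperbolic volume of the ideal triangular prism over a
hyperbolic triangle with angles `α₁, α₂, α₃`. -/
noncomputable def V (a : ℝ × ℝ × ℝ) : ℝ :=
  (1 / 2) * (Cl (2 * a.1) + Cl (2 * a.2.1) + Cl (2 * a.2.2)
    + Cl (Real.pi + a.1 - a.2.1 - a.2.2) + Cl (Real.pi - a.1 + a.2.1 - a.2.2)
    + Cl (Real.pi - a.1 - a.2.1 + a.2.2) + Cl (Real.pi - a.1 - a.2.1 - a.2.2))

open Real Filter Topology MeasureTheory intervalIntegral Complex


noncomputable def clf (t : ℝ) : ℝ := -Real.log (2 * Real.sin (t / 2))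




lemma sin_half_pos_aux {t : ℝ} (ht : t ∈ Set.Ioo 0 (2 * π)) : 0 < Real.sin (t / 2) :=
  Real.sin_pos_of_pos_of_lt_pi (by linarith [ht.1]) (by linarith [ht.2])

lemma sin_sq_half_aux (t : ℝ) : Real.sin (t / 2) ^ 2 = (1 - Real.cos t) / 2 := by
  have h1 : Real.cos (2 * (t / 2)) = 2 * Real.cos (t / 2) ^ 2 - 1 := Real.cos_two_mul _
  have h2 := Real.sin_sq_add_cos_sq (t / 2)
  have h3 : (2 : ℝ) * (t / 2) = t := by ring
  rw [h3] at h1; linarith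

lemma norm_lower_aux {t : ℝ} (ht : t ∈ Set.Ioo 0 (2 * π)) {r : ℝ} (hr : r ∈ Set.Icc (0:ℝ) 1) :
    Real.sin (t / 2) ≤ ‖1 - (r : ℂ) * Complex.exp (t * I)‖ := by
  set z := 1 - (r : ℂ) * Complex.exp (t * I) with hz
  have hre : z.re = 1 - r * Real.cos t := by
    simp [hz, Complex.sub_re, Complex.mul_re, Complex.exp_ofReal_mul_I_re,
      Complex.exp_ofReal_mul_I_im]
  have him : z.im = -(r * Real.sin t) := by
    simp [hz, Complex.sub_im, Complex.mul_im, Complex.exp_ofReal_mul_I_re,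
      Complex.exp_ofReal_mul_I_im]
  have hpyth := Real.sin_sq_add_cos_sq t
  have hn2 : ‖z‖ ^ 2 = 1 - 2 * r * Real.cos t + r ^ 2 := by
    rw [Complex.sq_norm, Complex.normSq_apply, hre, him]
    · nlinarith [hpyth]
  have hsq : Real.sin (t / 2) ^ 2 ≤ ‖z‖ ^ 2 := by
    rw [hn2, sin_sq_half_aux t]
    rcases le_or_gt (Real.cos t) 0 with h | h
    · nlinarith [hr.1, hr.2, mul_nonneg hr.1 (neg_nonneg.2 h), Real.neg_one_le_cos t, sq_nonneg r]
    · nlinarith [sq_nonneg (r - Real.cos t), mul_nonneg (sub_nonneg.2 (Real.cos_le_one t)) h.le]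
  have h0 : 0 ≤ Real.sin (t / 2) := (sin_half_pos_aux ht).le
  nlinarith [norm_nonneg z]




lemma one_sub_ne_aux {t : ℝ} (ht : t ∈ Set.Ioo 0 (2 * π)) {r : ℝ} (hr : r ∈ Set.Icc (0:ℝ) 1) :
    1 - (r : ℂ) * Complex.exp (t * I) ≠ 0 := by
  intro h
  have := norm_lower_aux ht hr
  rw [h, norm_zero] at this
  exact absurd this (not_le.2 (sin_half_pos_aux ht))

lemma slit_mem {t : ℝ} (ht : t ∈ Set.Ioo 0 (2 * π)) {r : ℝ} (hr : r ∈ Set.Icc (0:ℝ) 1) :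
    1 - (r : ℂ) * Complex.exp (t * I) ∈ Complex.slitPlane := by
  rw [Complex.mem_slitPlane_iff]
  left
  have hre : (1 - (r : ℂ) * Complex.exp (t * I)).re = 1 - r * Real.cos t := by
    simp [Complex.sub_re, Complex.mul_re, Complex.exp_ofReal_mul_I_re,
      Complex.exp_ofReal_mul_I_im]
  rw [hre]
  have hc1 : Real.cos t < 1 := by
    have := sin_sq_half_aux t
    nlinarith [sin_half_pos_aux ht]
  rcases le_or_gt (Real.cos t) 0 with h | h
  · nlinarith [hr.1, hr.2, mul_nonneg hr.1 (neg_nonneg.2 h)]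
  · nlinarith [hr.1, hr.2, mul_le_mul_of_nonneg_right hr.2 h.le]

lemma cont_inv {t : ℝ} (ht : t ∈ Set.Ioo 0 (2 * π)) :
    ContinuousOn (fun r : ℝ => Complex.exp (t * I) / (1 - (r : ℂ) * Complex.exp (t * I)))
      (Set.Icc 0 1) := by
  apply ContinuousOn.div continuousOn_const
  · fun_prop
  · intro r hr; exact one_sub_ne_aux ht hr

lemma integral_main_aux {t : ℝ} (ht : t ∈ Set.Ioo 0 (2 * π)) :
    ∫ r in (0:ℝ)..1, Complex.exp (t * I) / (1 - (r : ℂ) * Complex.exp (t * I)) =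
      -Complex.log (1 - Complex.exp (t * I)) := by
  have huIcc : Set.uIcc (0:ℝ) 1 = Set.Icc 0 1 := by
    rw [Set.uIcc_of_le]; norm_num
  have hderiv : ∀ r ∈ Set.uIcc (0:ℝ) 1,
      HasDerivAt (fun r : ℝ => -Complex.log (1 - (r : ℂ) * Complex.exp (t * I)))
        (Complex.exp (t * I) / (1 - (r : ℂ) * Complex.exp (t * I))) r := by
    intro r hr
    rw [huIcc] at hr
    have hinner : HasDerivAt (fun r : ℝ => 1 - (r : ℂ) * Complex.exp (t * I))
        (-Complex.exp (t * I)) r := by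
      have h1 : HasDerivAt (fun r : ℝ => ((r : ℂ))) 1 r := Complex.ofRealCLM.hasDerivAt
      simpa using (h1.mul_const (Complex.exp (t * I))).const_sub 1
    have houter := Complex.hasDerivAt_log (slit_mem ht hr)
    have := (houter.comp r hinner).neg
    convert this using 1
    · rfl
    · rfl
    · ring
  rw [integral_eq_sub_of_hasDerivAt hderiv]
  · norm_num
  · rw [intervalIntegrable_iff_integrableOn_Icc_of_le (by norm_num)]
    exact (cont_inv ht).integrableOn_compact isCompact_Icc

lemma norm_one_sub_exp_aux {t : ℝ} (ht : t ∈ Set.Ioo 0 (2 * π)) :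
    ‖1 - Complex.exp (t * I)‖ = 2 * Real.sin (t / 2) := by
  have hre : (1 - Complex.exp (t * I)).re = 1 - Real.cos t := by
    simp [Complex.sub_re, Complex.exp_ofReal_mul_I_re]
  have him : (1 - Complex.exp (t * I)).im = -Real.sin t := by
    simp [Complex.sub_im, Complex.exp_ofReal_mul_I_im]
  have hn2 : ‖1 - Complex.exp (t * I)‖ ^ 2 = 2 - 2 * Real.cos t := by
    rw [Complex.sq_norm, Complex.normSq_apply, hre, him]
    nlinarith [Real.sin_sq_add_cos_sq t]
  have hs := sin_half_pos_aux ht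
  have h2 := sin_sq_half_aux t
  nlinarith [norm_nonneg (1 - Complex.exp (t * I))]





lemma key_rep {t : ℝ} (ht : t ∈ Set.Ioo 0 (2 * π)) (N : ℕ) :
    (∑ n ∈ Finset.range N, Complex.exp (t * I) ^ (n + 1) / ((n : ℂ) + 1)) =
      ∫ r in (0:ℝ)..1, Complex.exp (t * I) * (1 - ((r : ℂ) * Complex.exp (t * I)) ^ N) /
        (1 - (r : ℂ) * Complex.exp (t * I)) := by
  have hcong : ∀ r ∈ Set.uIcc (0:ℝ) 1,
      Complex.exp (t * I) * (1 - ((r : ℂ) * Complex.exp (t * I)) ^ N) /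
        (1 - (r : ℂ) * Complex.exp (t * I))
        = ∑ n ∈ Finset.range N, (r : ℂ) ^ n * Complex.exp (t * I) ^ (n + 1) := by
    intro r hr
    rw [Set.uIcc_of_le (by norm_num)] at hr
    have hne := one_sub_ne_aux ht hr
    have hne1 : (r : ℂ) * Complex.exp (t * I) ≠ 1 := by
      intro h; apply hne; rw [h]; ring
    rw [show (∑ n ∈ Finset.range N, (r : ℂ) ^ n * Complex.exp (t * I) ^ (n + 1))
        = Complex.exp (t * I) * ∑ n ∈ Finset.range N, ((r : ℂ) * Complex.exp (t * I)) ^ n by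
      rw [Finset.mul_sum]; congr 1; funext n; rw [mul_pow, pow_succ]; ring]
    rw [geom_sum_eq hne1,
      show ((r : ℂ) * Complex.exp (t * I)) ^ N - 1
        = -(1 - ((r : ℂ) * Complex.exp (t * I)) ^ N) from by ring,
      show (r : ℂ) * Complex.exp (t * I) - 1 = -(1 - (r : ℂ) * Complex.exp (t * I)) from by ring,
      neg_div_neg_eq, mul_div_assoc]
  rw [intervalIntegral.integral_congr (fun r hr => hcong r hr)]
  rw [intervalIntegral.integral_finset_sum]
  · congr 1; funext n
    rw [intervalIntegral.integral_mul_const]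
    have hcast : ∀ r : ℝ, ((r : ℂ)) ^ n = ((r ^ n : ℝ) : ℂ) := by intro r; push_cast; ring
    simp_rw [hcast]
    rw [intervalIntegral.integral_ofReal, integral_pow]
    push_cast
    rw [one_pow, zero_pow (Nat.succ_ne_zero n)]
    ring
  · intro n _
    apply Continuous.intervalIntegrable
    fun_prop

lemma partial_sum_props {t : ℝ} (ht : t ∈ Set.Ioo 0 (2 * π)) :
    Tendsto (fun N => ∑ n ∈ Finset.range N, Real.cos (((n : ℝ) + 1) * t) / ((n : ℝ) + 1))
      atTop (𝓝 (clf t)) ∧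
    ∀ N, |∑ n ∈ Finset.range N, Real.cos (((n : ℝ) + 1) * t) / ((n : ℝ) + 1)| ≤
      2 / Real.sin (t / 2) := by
  have hs := sin_half_pos_aux ht
  have hre : ∀ N, (∑ n ∈ Finset.range N, Complex.exp (t * I) ^ (n + 1) / ((n : ℂ) + 1)).re
      = ∑ n ∈ Finset.range N, Real.cos (((n : ℝ) + 1) * t) / ((n : ℝ) + 1) := by
    intro N
    rw [Complex.re_sum]
    congr 1; funext n
    have h1 : Complex.exp (t * I) ^ (n + 1) = Complex.exp ((((n : ℝ) + 1) * t : ℝ) * I) := by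
      rw [← Complex.exp_nat_mul]
      congr 1
      push_cast
      ring
    have h2 : ((n : ℂ) + 1) = (((n : ℝ) + 1 : ℝ) : ℂ) := by push_cast; ring
    rw [h1, h2, Complex.div_ofReal_re, Complex.exp_ofReal_mul_I_re]
  constructor
  · -- convergence
    have hint1 : IntervalIntegrable (fun r : ℝ => Complex.exp (t * I) /
        (1 - (r : ℂ) * Complex.exp (t * I))) volume 0 1 := by
      rw [intervalIntegrable_iff_integrableOn_Icc_of_le (by norm_num)]
      apply ContinuousOn.integrableOn_compact isCompact_Icc
      apply ContinuousOn.div continuousOn_const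
      · fun_prop
      · intro r hr; exact one_sub_ne_aux ht hr
    have hint2 : ∀ N : ℕ, IntervalIntegrable (fun r : ℝ =>
        Complex.exp (t * I) * ((r : ℂ) * Complex.exp (t * I)) ^ N /
          (1 - (r : ℂ) * Complex.exp (t * I))) volume 0 1 := by
      intro N
      rw [intervalIntegrable_iff_integrableOn_Icc_of_le (by norm_num)]
      apply ContinuousOn.integrableOn_compact isCompact_Icc
      apply ContinuousOn.div
      · fun_prop
      · fun_prop
      · intro r hr; exact one_sub_ne_aux ht hr
    have hsplit : ∀ N : ℕ, (∑ n ∈ Finset.range N, Complex.exp (t * I) ^ (n + 1) / ((n : ℂ) + 1))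
        = (∫ r in (0:ℝ)..1, Complex.exp (t * I) / (1 - (r : ℂ) * Complex.exp (t * I))) -
          ∫ r in (0:ℝ)..1, Complex.exp (t * I) * ((r : ℂ) * Complex.exp (t * I)) ^ N /
            (1 - (r : ℂ) * Complex.exp (t * I)) := by
      intro N
      rw [key_rep ht N, ← intervalIntegral.integral_sub hint1 (hint2 N)]
      apply intervalIntegral.integral_congr
      intro r hr
      rw [Set.uIcc_of_le (by norm_num)] at hr
      have hne := one_sub_ne_aux ht hr
      field_simp
    have herr : Tendsto (fun N : ℕ => ∫ r in (0:ℝ)..1,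
        Complex.exp (t * I) * ((r : ℂ) * Complex.exp (t * I)) ^ N /
          (1 - (r : ℂ) * Complex.exp (t * I))) atTop (𝓝 0) := by
      apply squeeze_zero_norm (a := fun N : ℕ => 1 / Real.sin (t / 2) * (1 / ((N : ℝ) + 1)))
      · intro N
        have hgint : IntervalIntegrable (fun r : ℝ => r ^ N / Real.sin (t / 2)) volume 0 1 := by
          apply Continuous.intervalIntegrable; fun_prop
        have hb : ∀ r ∈ Set.uIoc (0:ℝ) 1,
            ‖Complex.exp (t * I) * ((r : ℂ) * Complex.exp (t * I)) ^ N /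
              (1 - (r : ℂ) * Complex.exp (t * I))‖ ≤ r ^ N / Real.sin (t / 2) := by
          intro r hr
          rw [Set.uIoc_of_le (by norm_num)] at hr
          have hr' : r ∈ Set.Icc (0:ℝ) 1 := ⟨hr.1.le, hr.2⟩
          rw [norm_div, norm_mul, mul_pow, norm_mul, norm_pow, norm_pow]
          have hee : ‖Complex.exp (t * I)‖ = 1 := by
            rw [Complex.norm_exp_ofReal_mul_I]
          have hrr : ‖(r : ℂ)‖ = r := by
            rw [Complex.norm_real, Real.norm_of_nonneg hr.1.le]
          rw [hee, hrr, one_pow, mul_one, one_mul]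
          exact div_le_div_of_nonneg_left (pow_nonneg hr.1.le N) hs (norm_lower_aux ht hr')
        have hae : ∀ᵐ (x : ℝ) ∂(volume.restrict (Set.uIoc (0:ℝ) 1)),
            ‖Complex.exp (t * I) * ((x : ℂ) * Complex.exp (t * I)) ^ N /
              (1 - (x : ℂ) * Complex.exp (t * I))‖ ≤ x ^ N / Real.sin (t / 2) := by
          rw [ae_restrict_iff' measurableSet_uIoc]
          exact ae_of_all _ hb
        calc ‖∫ r in (0:ℝ)..1, Complex.exp (t * I) * ((r : ℂ) * Complex.exp (t * I)) ^ N /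
              (1 - (r : ℂ) * Complex.exp (t * I))‖
            ≤ |∫ r in (0:ℝ)..1, r ^ N / Real.sin (t / 2)| :=
              intervalIntegral.norm_integral_le_abs_of_norm_le hae hgint
          _ = 1 / Real.sin (t / 2) * (1 / ((N : ℝ) + 1)) := by
              rw [intervalIntegral.integral_div, integral_pow, one_pow,
                zero_pow (Nat.succ_ne_zero N), _root_.abs_of_nonneg (by positivity)]
              field_simp
              ring
      · have := tendsto_one_div_add_atTop_nhds_zero_nat.const_mul (1 / Real.sin (t / 2))
        simpa using this
    have hlim : Tendsto (fun N : ℕ => ∑ n ∈ Finset.range N,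
        Complex.exp (t * I) ^ (n + 1) / ((n : ℂ) + 1)) atTop
        (𝓝 (-Complex.log (1 - Complex.exp (t * I)))) := by
      have h0 := (tendsto_const_nhds (x := ∫ r in (0:ℝ)..1, Complex.exp (t * I) /
        (1 - (r : ℂ) * Complex.exp (t * I))) (f := atTop (α := ℕ))).sub herr
      rw [sub_zero] at h0
      have h0' := h0.congr (fun N => (hsplit N).symm)
      rwa [integral_main_aux ht] at h0'
    have hfin := (Complex.continuous_re.tendsto _).comp hlim
    have hval : (-Complex.log (1 - Complex.exp (t * I))).re = clf t := by
      rw [Complex.neg_re, Complex.log_re, clf, ← norm_one_sub_exp_aux ht]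
    rw [hval] at hfin
    exact hfin.congr (fun N => (hre N))
  · -- uniform bound
    intro N
    rw [← hre N]
    have h1 : |(∑ n ∈ Finset.range N, Complex.exp (t * I) ^ (n + 1) / ((n : ℂ) + 1)).re| ≤
        ‖∑ n ∈ Finset.range N, Complex.exp (t * I) ^ (n + 1) / ((n : ℂ) + 1)‖ := by
      exact Complex.abs_re_le_norm _
    refine h1.trans ?_
    rw [key_rep ht N]
    have h2 : ∀ r ∈ Set.uIoc (0:ℝ) 1,
        ‖Complex.exp (t * I) * (1 - ((r : ℂ) * Complex.exp (t * I)) ^ N) /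
          (1 - (r : ℂ) * Complex.exp (t * I))‖ ≤ 2 / Real.sin (t / 2) := by
      intro r hr
      rw [Set.uIoc_of_le (by norm_num)] at hr
      have hr' : r ∈ Set.Icc (0:ℝ) 1 := ⟨hr.1.le, hr.2⟩
      rw [norm_div, norm_mul]
      have hee : ‖Complex.exp (t * I)‖ = 1 := by
        rw [Complex.norm_exp_ofReal_mul_I]
      have hnum : ‖(1 : ℂ) - ((r : ℂ) * Complex.exp (t * I)) ^ N‖ ≤ 2 := by
        refine (norm_sub_le _ _).trans ?_
        rw [norm_one, norm_pow, norm_mul, hee, mul_one]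
        have hrr : ‖(r : ℂ)‖ = r := by
          rw [Complex.norm_real, Real.norm_of_nonneg hr.1.le]
        rw [hrr]
        nlinarith [pow_le_one₀ hr.1.le hr.2 (n := N), pow_nonneg hr.1.le N]
      rw [hee, one_mul]
      exact div_le_div₀ (by norm_num) hnum hs (norm_lower_aux ht hr')
    refine (intervalIntegral.norm_integral_le_of_norm_le_const h2).trans ?_
    norm_num







lemma Cl_hasSum (x : ℝ) :
    HasSum (fun n : ℕ => Real.sin (((n : ℝ) + 1) * x) / ((n : ℝ) + 1) ^ 2) (Cl x) := by
  have hsummable : Summable (fun n : ℕ => Real.sin (((n : ℝ) + 1) * x) / ((n : ℝ) + 1) ^ 2) := by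
    apply Summable.of_norm_bounded (g := fun n : ℕ => 1 / ((n : ℝ) + 1) ^ 2)
    · have h := Real.summable_one_div_nat_pow.mpr (by norm_num : 1 < 2)
      have h2 := (summable_nat_add_iff 1).mpr h
      apply h2.congr
      intro n
      push_cast
      ring
    · intro n
      rw [norm_div, Real.norm_of_nonneg (by positivity : (0:ℝ) ≤ ((n : ℝ) + 1) ^ 2)]
      apply div_le_div_of_nonneg_right ?_ (by positivity)
      rw [Real.norm_eq_abs]
      exact Real.abs_sin_le_one _
  exact hsummable.hasSum

lemma clf_contOn : ContinuousOn clf (Set.Ioo 0 (2 * π)) := by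
  apply ContinuousOn.neg
  apply ContinuousOn.log
  · fun_prop
  · intro t ht
    have := sin_half_pos_aux ht
    positivity

lemma uIcc_subset {x : ℝ} (hx : x ∈ Set.Ioo 0 (2 * π)) :
    Set.uIcc π x ⊆ Set.Ioo 0 (2 * π) := by
  apply Set.OrdConnected.uIcc_subset Set.ordConnected_Ioo
  · constructor <;> [positivity; linarith [Real.pi_pos]]
  · exact hx

lemma Cl_rep {x : ℝ} (hx : x ∈ Set.Ioo 0 (2 * π)) :
    Cl x = Cl π + ∫ t in π..x, clf t := by
  have hπ : (π : ℝ) ∈ Set.Ioo 0 (2 * π) := ⟨Real.pi_pos, by linarith [Real.pi_pos]⟩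
  have hIsub : Set.uIoc π x ⊆ Set.Ioo 0 (2 * π) := fun t ht =>
    uIcc_subset hx (Set.Ioc_subset_Icc_self ht)
  -- partial sums of the integral
  have hint_eq : ∀ N : ℕ, (∫ t in π..x,
        ∑ n ∈ Finset.range N, Real.cos (((n : ℝ) + 1) * t) / ((n : ℝ) + 1))
      = (∑ n ∈ Finset.range N, Real.sin (((n : ℝ) + 1) * x) / ((n : ℝ) + 1) ^ 2)
        - ∑ n ∈ Finset.range N, Real.sin (((n : ℝ) + 1) * π) / ((n : ℝ) + 1) ^ 2 := by
    intro N
    rw [intervalIntegral.integral_finset_sum (fun n _ => by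
      apply Continuous.intervalIntegrable; fun_prop)]
    rw [← Finset.sum_sub_distrib]
    congr 1; funext n
    have hderiv : ∀ t : ℝ, HasDerivAt (fun t => Real.sin (((n : ℝ) + 1) * t) / ((n : ℝ) + 1) ^ 2)
        (Real.cos (((n : ℝ) + 1) * t) / ((n : ℝ) + 1)) t := by
      intro t
      have h1 : HasDerivAt (fun t : ℝ => ((n : ℝ) + 1) * t) ((n : ℝ) + 1) t := by
        simpa using (hasDerivAt_id t).const_mul ((n : ℝ) + 1)
      have h2 := (Real.hasDerivAt_sin (((n : ℝ) + 1) * t)).comp t h1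
      have h3 := h2.div_const (((n : ℝ) + 1) ^ 2)
      convert h3 using 1
      have hn : ((n : ℝ) + 1) ≠ 0 := by positivity
      · rfl
      · rfl
      · rfl
      · rw [pow_two, mul_div_mul_right _ _ (by positivity : ((n : ℝ) + 1) ≠ 0)]
    rw [intervalIntegral.integral_eq_sub_of_hasDerivAt (fun t _ => hderiv t)
      (by apply Continuous.intervalIntegrable; fun_prop)]
  -- tendsto of integrals via DCT
  have hDCT : Tendsto (fun N : ℕ => ∫ t in π..x,
      ∑ n ∈ Finset.range N, Real.cos (((n : ℝ) + 1) * t) / ((n : ℝ) + 1))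
      atTop (𝓝 (∫ t in π..x, clf t)) := by
    apply intervalIntegral.tendsto_integral_filter_of_dominated_convergence
      (bound := fun t => 2 / Real.sin (t / 2))
    · filter_upwards with N
      apply Continuous.aestronglyMeasurable
      fun_prop
    · filter_upwards with N
      filter_upwards with t
      intro htI
      exact (partial_sum_props (hIsub htI)).2 N
    · apply ContinuousOn.intervalIntegrable
      apply ContinuousOn.div continuousOn_const (by fun_prop)
      intro t htI
      exact ne_of_gt (sin_half_pos_aux (uIcc_subset hx htI))
    · filter_upwards with t
      intro htI
      exact (partial_sum_props (hIsub htI)).1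
  have hL : Tendsto (fun N : ℕ => ∫ t in π..x,
      ∑ n ∈ Finset.range N, Real.cos (((n : ℝ) + 1) * t) / ((n : ℝ) + 1))
      atTop (𝓝 (Cl x - Cl π)) := by
    have h1 := (Cl_hasSum x).tendsto_sum_nat.sub (Cl_hasSum π).tendsto_sum_nat
    exact h1.congr (fun N => (hint_eq N).symm)
  have := tendsto_nhds_unique hL hDCT
  linarith

lemma hasDerivAt_Cl {x : ℝ} (hx : x ∈ Set.Ioo 0 (2 * π)) :
    HasDerivAt Cl (-Real.log (2 * Real.sin (x / 2))) x := by
  have hopen : IsOpen (Set.Ioo (0:ℝ) (2 * π)) := isOpen_Ioo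
  have hmem : Set.Ioo (0:ℝ) (2 * π) ∈ 𝓝 x := hopen.mem_nhds hx
  have hint : IntervalIntegrable clf volume π x := by
    apply ContinuousOn.intervalIntegrable
    exact clf_contOn.mono (uIcc_subset hx)
  have hmeas : StronglyMeasurableAtFilter clf (𝓝 x) :=
    ContinuousOn.stronglyMeasurableAtFilter hopen clf_contOn x hx
  have hcont : ContinuousAt clf x := clf_contOn.continuousAt hmem
  have hG : HasDerivAt (fun y => Cl π + ∫ t in π..y, clf t) (clf x) x :=
    (intervalIntegral.integral_hasDerivAt_right hint hmeas hcont).const_add (Cl π)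
  have heq : (fun y => Cl π + ∫ t in π..y, clf t) =ᶠ[𝓝 x] Cl := by
    filter_upwards [hmem] with y hy
    rw [Cl_rep hy]
  exact (hG.congr_of_eventuallyEq heq.symm)





/-- For positive `α₁, α₂, α₃` with `α₁ + α₂ + α₃ < π`, Leibon's volume function `V` is
differentiable, and `(∂/∂α₂ + ∂/∂α₃) V = log (cos((α₁+α₂+α₃)/2) cos((−α₁+α₂+α₃)/2) /
(sin α₂ sin α₃)) = 2 log sinh (a₁/2)`, where `a₁` is the side of the hyperbolic triangle with
angles `α₁, α₂, α₃` opposite to `α₁`. -/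
theorem leibon_volume_derivative (α₁ α₂ α₃ : ℝ) (h₁ : 0 < α₁) (h₂ : 0 < α₂) (h₃ : 0 < α₃)
    (hsum : α₁ + α₂ + α₃ < Real.pi) :
    DifferentiableAt ℝ V (α₁, α₂, α₃) ∧
    HasDerivAt (fun t : ℝ => V (α₁, α₂ + t, α₃ + t))
      (Real.log ((Real.cos ((α₁ + α₂ + α₃) / 2) * Real.cos ((-α₁ + α₂ + α₃) / 2)) /
        (Real.sin α₂ * Real.sin α₃))) 0 ∧
    ∀ a₁ : ℝ, 0 < a₁ →
      Real.cosh a₁ =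
        (Real.cos α₂ * Real.cos α₃ + Real.cos α₁) / (Real.sin α₂ * Real.sin α₃) →
      Real.log ((Real.cos ((α₁ + α₂ + α₃) / 2) * Real.cos ((-α₁ + α₂ + α₃) / 2)) /
          (Real.sin α₂ * Real.sin α₃)) =
        2 * Real.log (Real.sinh (a₁ / 2)) := by
  have hπ := Real.pi_pos
  have m1 : 2 * α₁ ∈ Set.Ioo (0:ℝ) (2 * π) := ⟨by linarith, by linarith⟩
  have m2 : 2 * α₂ ∈ Set.Ioo (0:ℝ) (2 * π) := ⟨by linarith, by linarith⟩
  have m3 : 2 * α₃ ∈ Set.Ioo (0:ℝ) (2 * π) := ⟨by linarith, by linarith⟩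
  have m4 : π + α₁ - α₂ - α₃ ∈ Set.Ioo (0:ℝ) (2 * π) := ⟨by linarith, by linarith⟩
  have m5 : π - α₁ + α₂ - α₃ ∈ Set.Ioo (0:ℝ) (2 * π) := ⟨by linarith, by linarith⟩
  have m6 : π - α₁ - α₂ + α₃ ∈ Set.Ioo (0:ℝ) (2 * π) := ⟨by linarith, by linarith⟩
  have m7 : π - α₁ - α₂ - α₃ ∈ Set.Ioo (0:ℝ) (2 * π) := ⟨by linarith, by linarith⟩
  -- positivity facts
  have hsin2 : 0 < Real.sin α₂ := Real.sin_pos_of_pos_of_lt_pi h₂ (by linarith)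
  have hsin3 : 0 < Real.sin α₃ := Real.sin_pos_of_pos_of_lt_pi h₃ (by linarith)
  have hcosS : 0 < Real.cos ((α₁ + α₂ + α₃) / 2) :=
    Real.cos_pos_of_mem_Ioo ⟨by linarith, by linarith [Real.pi_gt_three]⟩
  have hcosM : 0 < Real.cos ((-α₁ + α₂ + α₃) / 2) :=
    Real.cos_pos_of_mem_Ioo ⟨by linarith, by linarith⟩
  refine ⟨?_, ?_, ?_⟩
  · -- differentiability
    unfold V
    apply DifferentiableAt.const_mul
    have hc : ∀ (g : ℝ × ℝ × ℝ → ℝ) (_ : DifferentiableAt ℝ g (α₁, α₂, α₃))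
        (_ : g (α₁, α₂, α₃) ∈ Set.Ioo (0:ℝ) (2 * π)),
        DifferentiableAt ℝ (fun a => Cl (g a)) (α₁, α₂, α₃) := by
      intro g hg hmem
      show DifferentiableAt ℝ (Cl ∘ g) (α₁, α₂, α₃)
      exact DifferentiableAt.comp _ (hasDerivAt_Cl hmem).differentiableAt hg
    refine ((((((hc _ ?_ ?_).add (hc _ ?_ ?_)).add (hc _ ?_ ?_)).add (hc _ ?_ ?_)).add
      (hc _ ?_ ?_)).add (hc _ ?_ ?_)).add (hc _ ?_ ?_) <;>
      first
        | fun_prop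
        | assumption
  · -- derivative
    have keyfun : (fun t : ℝ => V (α₁, α₂ + t, α₃ + t)) = fun t : ℝ =>
        (1 / 2) * (Cl (2 * α₁) + Cl (2 * α₂ + 2 * t) + Cl (2 * α₃ + 2 * t)
          + Cl ((π + α₁ - α₂ - α₃) + (-2) * t) + Cl (π - α₁ + α₂ - α₃)
          + Cl (π - α₁ - α₂ + α₃) + Cl ((π - α₁ - α₂ - α₃) + (-2) * t)) := by
      funext t
      unfold V
      ring_nf
    rw [keyfun]
    have haff : ∀ (c k : ℝ), HasDerivAt (fun t : ℝ => c + k * t) k 0 := by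
      intro c k
      simpa using ((hasDerivAt_id (0:ℝ)).const_mul k).const_add c
    have hcomp : ∀ (c k : ℝ), c ∈ Set.Ioo (0:ℝ) (2 * π) →
        HasDerivAt (fun t : ℝ => Cl (c + k * t)) (-Real.log (2 * Real.sin (c / 2)) * k) 0 := by
      intro c k hc
      have h0 : c + k * 0 = c := by ring
      have hin := haff c k
      have hout := hasDerivAt_Cl (x := c + k * 0) (by rw [h0]; exact hc)
      have := hout.comp 0 hin
      rw [h0] at this
      exact this
    have hconst : ∀ c : ℝ, HasDerivAt (fun _ : ℝ => Cl c) 0 0 := fun c => hasDerivAt_const 0 _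
    have h2' : HasDerivAt (fun t : ℝ => Cl (2 * α₂ + 2 * t))
        (-Real.log (2 * Real.sin (2 * α₂ / 2)) * 2) 0 := hcomp _ 2 m2
    have h3' : HasDerivAt (fun t : ℝ => Cl (2 * α₃ + 2 * t))
        (-Real.log (2 * Real.sin (2 * α₃ / 2)) * 2) 0 := hcomp _ 2 m3
    have h4' : HasDerivAt (fun t : ℝ => Cl ((π + α₁ - α₂ - α₃) + (-2) * t))
        (-Real.log (2 * Real.sin ((π + α₁ - α₂ - α₃) / 2)) * (-2)) 0 := hcomp _ (-2) m4
    have h7' : HasDerivAt (fun t : ℝ => Cl ((π - α₁ - α₂ - α₃) + (-2) * t))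
        (-Real.log (2 * Real.sin ((π - α₁ - α₂ - α₃) / 2)) * (-2)) 0 := hcomp _ (-2) m7
    have hbig := (((((((hconst (2 * α₁)).add h2').add h3').add h4').add
      (hconst (π - α₁ + α₂ - α₃))).add (hconst (π - α₁ - α₂ + α₃))).add h7').const_mul (1/2 : ℝ)
    -- simplify the sine values
    have e2 : Real.sin (2 * α₂ / 2) = Real.sin α₂ := by norm_num
    have e3 : Real.sin (2 * α₃ / 2) = Real.sin α₃ := by norm_num
    have e4 : Real.sin ((π + α₁ - α₂ - α₃) / 2) = Real.cos ((-α₁ + α₂ + α₃) / 2) := by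
      rw [show (π + α₁ - α₂ - α₃) / 2 = π / 2 - (-α₁ + α₂ + α₃) / 2 by ring,
        Real.sin_pi_div_two_sub]
    have e7 : Real.sin ((π - α₁ - α₂ - α₃) / 2) = Real.cos ((α₁ + α₂ + α₃) / 2) := by
      rw [show (π - α₁ - α₂ - α₃) / 2 = π / 2 - (α₁ + α₂ + α₃) / 2 by ring,
        Real.sin_pi_div_two_sub]
    rw [e2, e3, e4, e7] at hbig
    have hval : (1/2 : ℝ) * (0 + -Real.log (2 * Real.sin α₂) * 2 + -Real.log (2 * Real.sin α₃) * 2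
        + -Real.log (2 * Real.cos ((-α₁ + α₂ + α₃) / 2)) * (-2) + 0 + 0
        + -Real.log (2 * Real.cos ((α₁ + α₂ + α₃) / 2)) * (-2))
        = Real.log ((Real.cos ((α₁ + α₂ + α₃) / 2) * Real.cos ((-α₁ + α₂ + α₃) / 2)) /
          (Real.sin α₂ * Real.sin α₃)) := by
      have l1 : Real.log (2 * Real.sin α₂) = Real.log 2 + Real.log (Real.sin α₂) :=
        Real.log_mul two_ne_zero (ne_of_gt hsin2)
      have l2 : Real.log (2 * Real.sin α₃) = Real.log 2 + Real.log (Real.sin α₃) :=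
        Real.log_mul two_ne_zero (ne_of_gt hsin3)
      have l3 : Real.log (2 * Real.cos ((-α₁ + α₂ + α₃) / 2))
          = Real.log 2 + Real.log (Real.cos ((-α₁ + α₂ + α₃) / 2)) :=
        Real.log_mul two_ne_zero (ne_of_gt hcosM)
      have l4 : Real.log (2 * Real.cos ((α₁ + α₂ + α₃) / 2))
          = Real.log 2 + Real.log (Real.cos ((α₁ + α₂ + α₃) / 2)) :=
        Real.log_mul two_ne_zero (ne_of_gt hcosS)
      have r1 : Real.log ((Real.cos ((α₁ + α₂ + α₃) / 2) * Real.cos ((-α₁ + α₂ + α₃) / 2)) /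
            (Real.sin α₂ * Real.sin α₃))
          = Real.log (Real.cos ((α₁ + α₂ + α₃) / 2) * Real.cos ((-α₁ + α₂ + α₃) / 2))
            - Real.log (Real.sin α₂ * Real.sin α₃) :=
        Real.log_div (by positivity) (by positivity)
      have r2 : Real.log (Real.cos ((α₁ + α₂ + α₃) / 2) * Real.cos ((-α₁ + α₂ + α₃) / 2))
          = Real.log (Real.cos ((α₁ + α₂ + α₃) / 2)) + Real.log (Real.cos ((-α₁ + α₂ + α₃) / 2)) :=
        Real.log_mul (ne_of_gt hcosS) (ne_of_gt hcosM)
      have r3 : Real.log (Real.sin α₂ * Real.sin α₃)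
          = Real.log (Real.sin α₂) + Real.log (Real.sin α₃) :=
        Real.log_mul (ne_of_gt hsin2) (ne_of_gt hsin3)
      rw [l1, l2, l3, l4, r1, r2, r3]
      ring
    rw [← hval]
    exact hbig
  · -- the identity with sinh
    intro a₁ ha₁ hcosh
    have hss : Real.sin α₂ * Real.sin α₃ ≠ 0 := by positivity
    have hprod : Real.cos ((α₁ + α₂ + α₃) / 2) * Real.cos ((-α₁ + α₂ + α₃) / 2)
        = (Real.cos α₁ + (Real.cos α₂ * Real.cos α₃ - Real.sin α₂ * Real.sin α₃)) / 2 := by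
      have e1 : (α₁ + α₂ + α₃) / 2 = (α₂ + α₃) / 2 + α₁ / 2 := by ring
      have e2 : (-α₁ + α₂ + α₃) / 2 = (α₂ + α₃) / 2 - α₁ / 2 := by ring
      rw [e1, e2, Real.cos_add, Real.cos_sub]
      have p1 := Real.sin_sq_add_cos_sq ((α₂ + α₃) / 2)
      have p2 := Real.sin_sq_add_cos_sq (α₁ / 2)
      have d1 : Real.cos α₁ = 2 * Real.cos (α₁ / 2) ^ 2 - 1 := by
        rw [show α₁ = 2 * (α₁ / 2) by ring, Real.cos_two_mul]
        ring_nf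
      have d2 : Real.cos α₂ * Real.cos α₃ - Real.sin α₂ * Real.sin α₃
          = 2 * Real.cos ((α₂ + α₃) / 2) ^ 2 - 1 := by
        rw [← Real.cos_add, show α₂ + α₃ = 2 * ((α₂ + α₃) / 2) by ring, Real.cos_two_mul]
        norm_num
      nlinarith [p1, p2, d1, d2]
    have hch : Real.cosh a₁ * (Real.sin α₂ * Real.sin α₃)
        = Real.cos α₂ * Real.cos α₃ + Real.cos α₁ := by
      rw [hcosh]; field_simp
    have hsh : Real.sinh (a₁ / 2) ^ 2 = (Real.cosh a₁ - 1) / 2 := by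
      have hc2 := Real.cosh_two_mul (a₁ / 2)
      have hc3 := Real.cosh_sq (a₁ / 2)
      rw [show 2 * (a₁ / 2) = a₁ by ring] at hc2
      linarith
    have hC : (Real.cos ((α₁ + α₂ + α₃) / 2) * Real.cos ((-α₁ + α₂ + α₃) / 2)) /
        (Real.sin α₂ * Real.sin α₃) = Real.sinh (a₁ / 2) ^ 2 := by
      rw [div_eq_iff hss, hprod]
      linear_combination (-(Real.sin α₂ * Real.sin α₃)) * hsh - (1/2) * hch
    rw [hC, show Real.sinh (a₁ / 2) ^ 2 = Real.sinh (a₁ / 2) ^ (2:ℕ) by norm_num, Real.log_pow]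
    push_cast
    ring
end
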